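/- Let d ≥ 1, let X be a compact metric space, let f : X → X be a homeomorphism, and let A be a continuous linear cocycle over f. Let S ⊆ X satisfy f(S) = S, and let P : S → (ℝ^d →L[ℝ] ℝ^d) satisfy P(x) ∘ P(x) = P(x) and A(x) ∘ P(x) = P(f x) ∘ A(x) for all x ∈ S, with rank(P(x)) = k constant on S, 1 ≤ k ≤ d − 1; write E(x) = range P(x), F(x) = ker P(x). Suppose there exist an integer m ≥ 1 and λ ∈ (0,1) such that ‖A^m(x)|E(x)‖ · ‖A^{-m}(f^m x)|F(f^m x)‖ ≤ λ for every x ∈ S. Then there exists a continuous map P̄ : closure(S) → (ℝ^d →L[ℝ] ℝ^d) such that for all x ∈ closure(S): P̄(x) ∘ P̄(x) = P̄(x), A(x) ∘ P̄(x) = P̄(f x) ∘ A(x), rank(P̄(x)) = k, and ‖A^m(x)|range P̄(x)‖ · ‖A^{-m}(f^m x)|ker P̄(f^m x)‖ ≤ λ; moreover P̄(x) = P(x) for every x ∈ S. -/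

import Mathlib

open Filter Topology MeasureTheory

set_option maxHeartbeats 1000000
set_option synthInstance.maxHeartbeats 1000000
set_option linter.unusedSectionVars false


noncomputable section

variable {X : Type*}

/-- Positive iterates of a linear cocycle: `cpow f A n x = A(f^{n-1}x) ∘ ⋯ ∘ A(x)`. -/
def cpow {d : ℕ} (f : X → X)
    (A : X → (EuclideanSpace ℝ (Fin d) →L[ℝ] EuclideanSpace ℝ (Fin d))) :
    ℕ → X → (EuclideanSpace ℝ (Fin d) →L[ℝ] EuclideanSpace ℝ (Fin d))
  | 0, _ => 1
  | n + 1, x => cpow f A n (f x) ∘L A x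

/-- Iterates of the cocycle over `ℤ`, with `A^{-n}(x) = (A^n(f^{-n}x))⁻¹`. -/
def cIter {d : ℕ} [TopologicalSpace X] (f : X ≃ₜ X)
    (A : X → (EuclideanSpace ℝ (Fin d) →L[ℝ] EuclideanSpace ℝ (Fin d)))
    (n : ℤ) (x : X) : EuclideanSpace ℝ (Fin d) →L[ℝ] EuclideanSpace ℝ (Fin d) :=
  if 0 ≤ n then cpow f A n.toNat x
  else Ring.inverse (cpow f A (-n).toNat ((f.symm : X → X)^[(-n).toNat] x))

/-- Operator norm of the restriction of `T` to the subspace `E`, i.e. `‖T|E‖`. -/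
def subNorm {d : ℕ} (T : EuclideanSpace ℝ (Fin d) →L[ℝ] EuclideanSpace ℝ (Fin d))
    (E : Submodule ℝ (EuclideanSpace ℝ (Fin d))) : ℝ :=
  ‖T ∘L E.subtypeL‖

section Aux

variable {d : ℕ}

local notation "V" => EuclideanSpace ℝ (Fin d)
local notation "L" => V →L[ℝ] V

/- ### subNorm lemmas -/

lemma subNorm_nonneg (T : L) (E : Submodule ℝ V) : 0 ≤ subNorm T E := by
  unfold subNorm; exact norm_nonneg (T ∘L E.subtypeL)

lemma norm_le_subNorm (T : L) {E : Submodule ℝ V} {v : V} (hv : v ∈ E) :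
    ‖T v‖ ≤ subNorm T E * ‖v‖ := by
  simpa [subNorm] using (T ∘L E.subtypeL).le_opNorm ⟨v, hv⟩

lemma subNorm_le_of_forall {T : L} {E : Submodule ℝ V} {c : ℝ} (hc : 0 ≤ c)
    (h : ∀ v ∈ E, ‖T v‖ ≤ c * ‖v‖) : subNorm T E ≤ c := by
  apply ContinuousLinearMap.opNorm_le_bound _ hc
  rintro ⟨v, hv⟩
  simpa using h v hv

lemma subNorm_comp_le {T₂ T₁ : L} {E E' : Submodule ℝ V} (h : ∀ v ∈ E, T₁ v ∈ E') :
    subNorm (T₂ ∘L T₁) E ≤ subNorm T₂ E' * subNorm T₁ E := by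
  apply subNorm_le_of_forall (mul_nonneg (subNorm_nonneg _ _) (subNorm_nonneg _ _))
  intro v hv
  calc ‖(T₂ ∘L T₁) v‖ = ‖T₂ (T₁ v)‖ := by simp
    _ ≤ subNorm T₂ E' * ‖T₁ v‖ := norm_le_subNorm _ (h v hv)
    _ ≤ subNorm T₂ E' * (subNorm T₁ E * ‖v‖) :=
        mul_le_mul_of_nonneg_left (norm_le_subNorm _ hv) (subNorm_nonneg _ _)
    _ = subNorm T₂ E' * subNorm T₁ E * ‖v‖ := by ring

lemma subNorm_le_norm (T : L) (E : Submodule ℝ V) : subNorm T E ≤ ‖T‖ :=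
  subNorm_le_of_forall (norm_nonneg _) fun v _ => T.le_opNorm v

lemma subNorm_one_le (E : Submodule ℝ V) : subNorm (1 : L) E ≤ 1 :=
  subNorm_le_of_forall zero_le_one fun v _ => by simp

/- ### Ring.inverse helpers -/

lemma inv_comp_cancel {B : L} (hB : IsUnit B) : Ring.inverse B ∘L B = 1 := by
  rw [← ContinuousLinearMap.mul_def]; exact Ring.inverse_mul_cancel _ hB

lemma comp_inv_cancel {B : L} (hB : IsUnit B) : B ∘L Ring.inverse B = 1 := by
  rw [← ContinuousLinearMap.mul_def]; exact Ring.mul_inverse_cancel _ hB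

lemma inv_apply_apply {B : L} (hB : IsUnit B) (v : V) : Ring.inverse B (B v) = v := by
  have := inv_comp_cancel hB
  calc Ring.inverse B (B v) = (Ring.inverse B ∘L B) v := rfl
    _ = v := by rw [this]; simp

lemma apply_inv_apply {B : L} (hB : IsUnit B) (v : V) : B (Ring.inverse B v) = v := by
  have := comp_inv_cancel hB
  calc B (Ring.inverse B v) = (B ∘L Ring.inverse B) v := rfl
    _ = v := by rw [this]; simp

lemma isUnit_inverse {B : L} (hB : IsUnit B) : IsUnit (Ring.inverse B) := by
  obtain ⟨u, rfl⟩ := hB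
  rw [Ring.inverse_unit]
  exact u⁻¹.isUnit

lemma inverse_inverse {B : L} (hB : IsUnit B) : Ring.inverse (Ring.inverse B) = B := by
  obtain ⟨u, rfl⟩ := hB
  rw [Ring.inverse_unit, Ring.inverse_unit, inv_inv]

lemma inverse_comp {B C : L} (hB : IsUnit B) (hC : IsUnit C) :
    Ring.inverse (B ∘L C) = Ring.inverse C ∘L Ring.inverse B := by
  obtain ⟨u, rfl⟩ := hB
  obtain ⟨w, rfl⟩ := hC
  rw [← ContinuousLinearMap.mul_def, ← ContinuousLinearMap.mul_def, ← Units.val_mul,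
    Ring.inverse_unit, Ring.inverse_unit, Ring.inverse_unit, mul_inv_rev, Units.val_mul]

lemma unit_injective {B : L} (hB : IsUnit B) {v : V} (hv : B v = 0) : v = 0 := by
  have := inv_apply_apply hB v
  rw [hv] at this
  simpa using this.symm

lemma subNorm_pos {T : L} (hT : IsUnit T) {E : Submodule ℝ V} (hE : E ≠ ⊥) :
    0 < subNorm T E := by
  obtain ⟨v, hv, hv0⟩ := Submodule.exists_mem_ne_zero_of_ne_bot hE
  have hTv : T v ≠ 0 := fun h => hv0 (unit_injective hT h)
  have h1 : 0 < ‖T v‖ := norm_pos_iff.mpr hTv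
  have h2 := norm_le_subNorm T hv
  nlinarith [norm_nonneg v, norm_pos_iff.mpr hv0]

/- ### cpow lemmas -/

lemma cpow_zero (f : X → X) (A : X → L) (x : X) : cpow f A 0 x = 1 := rfl

lemma cpow_succ (f : X → X) (A : X → L) (n : ℕ) (x : X) :
    cpow f A (n + 1) x = cpow f A n (f x) ∘L A x := rfl

lemma cpow_add (f : X → X) (A : X → L) (a b : ℕ) (x : X) :
    cpow f A (a + b) x = cpow f A a (f^[b] x) ∘L cpow f A b x := by
  induction b generalizing x with
  | zero =>
      simp [cpow_zero, ContinuousLinearMap.one_def, ContinuousLinearMap.comp_id]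
  | succ b ih =>
      have : a + (b + 1) = (a + b) + 1 := by ring
      rw [this, cpow_succ, ih (f x), cpow_succ, Function.iterate_succ_apply,
        ContinuousLinearMap.comp_assoc]

lemma cpow_isUnit (f : X → X) {A : X → L} (hA : ∀ x, IsUnit (A x)) (n : ℕ) (x : X) :
    IsUnit (cpow f A n x) := by
  induction n generalizing x with
  | zero => exact isUnit_one
  | succ n ih =>
      rw [cpow_succ, ← ContinuousLinearMap.mul_def]
      exact (ih (f x)).mul (hA x)

lemma cpow_continuous {f : X → X} [TopologicalSpace X] (hf : Continuous f) {A : X → L}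
    (hA : Continuous A) (n : ℕ) : Continuous fun x => cpow f A n x := by
  induction n with
  | zero => simpa [cpow_zero] using continuous_const
  | succ n ih =>
      simp only [cpow_succ, ← ContinuousLinearMap.mul_def]
      exact (ih.comp hf).mul hA

lemma cpow_inv_continuous {f : X → X} [TopologicalSpace X] (hf : Continuous f) {A : X → L}
    (hA : Continuous A) (hAinv : ∀ x, IsUnit (A x)) (n : ℕ) :
    Continuous fun x => Ring.inverse (cpow f A n x) := by
  rw [continuous_iff_continuousAt]
  intro x
  have h1 : ContinuousAt Ring.inverse (cpow f A n x) := by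
    obtain ⟨u, hu⟩ := cpow_isUnit f hAinv n x
    rw [← hu]
    exact NormedRing.inverse_continuousAt u
  exact h1.comp (cpow_continuous hf hA n).continuousAt

/- ### cIter lemmas -/

lemma cIter_coe [TopologicalSpace X] (f : X ≃ₜ X) (A : X → L) (n : ℕ) (x : X) :
    cIter f A (n : ℤ) x = cpow f A n x := by
  rw [cIter, if_pos (by positivity), Int.toNat_natCast]

lemma cIter_neg_coe [TopologicalSpace X] (f : X ≃ₜ X) (A : X → L) (n : ℕ) (x : X) :
    cIter f A (-(n : ℤ)) x = Ring.inverse (cpow f A n ((f.symm : X → X)^[n] x)) := by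
  rcases Nat.eq_zero_or_pos n with h | h
  · subst h
    simp [cIter, cpow_zero]
  · rw [cIter, if_neg (by omega), neg_neg, Int.toNat_natCast]

lemma symm_iterate_iterate [TopologicalSpace X] (f : X ≃ₜ X) (n : ℕ) (x : X) :
    (f.symm : X → X)^[n] ((f : X → X)^[n] x) = x := by
  have : Function.LeftInverse (f.symm : X → X) (f : X → X) := f.left_inv
  exact this.iterate n ((f : X → X)^[n] x) ▸ (this.iterate n) x

lemma cIter_neg_iterate [TopologicalSpace X] (f : X ≃ₜ X) (A : X → L) (n : ℕ) (x : X) :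
    cIter f A (-(n : ℤ)) ((f : X → X)^[n] x) = Ring.inverse (cpow f A n x) := by
  rw [cIter_neg_coe, symm_iterate_iterate]

/- ### idempotent lemmas -/

lemma idem_apply_mem_range {R : L} (hR : R ∘L R = R) {v : V}
    (hv : v ∈ LinearMap.range (R : EuclideanSpace ℝ (Fin d) →ₗ[ℝ] EuclideanSpace ℝ (Fin d))) : R v = v := by
  obtain ⟨u, rfl⟩ := hv
  calc R (R u) = (R ∘L R) u := rfl
    _ = R u := by rw [hR]

lemma idem_isCompl {R : L} (hR : R ∘L R = R) :
    IsCompl (LinearMap.range (R : EuclideanSpace ℝ (Fin d) →ₗ[ℝ] EuclideanSpace ℝ (Fin d))) (LinearMap.ker (R : EuclideanSpace ℝ (Fin d) →ₗ[ℝ] EuclideanSpace ℝ (Fin d))) := by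
  constructor
  · rw [Submodule.disjoint_def]
    intro v hvr hvk
    have h1 : R v = v := idem_apply_mem_range hR hvr
    have h2 : R v = 0 := hvk
    rw [h2] at h1; exact h1.symm
  · rw [codisjoint_iff, eq_top_iff]
    intro u _
    have h1 : R u ∈ LinearMap.range (R : EuclideanSpace ℝ (Fin d) →ₗ[ℝ] EuclideanSpace ℝ (Fin d)) := LinearMap.mem_range_self _ u
    have h2 : u - R u ∈ LinearMap.ker (R : EuclideanSpace ℝ (Fin d) →ₗ[ℝ] EuclideanSpace ℝ (Fin d)) := by
      have : R (u - R u) = R u - R (R u) := map_sub _ _ _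
      have h3 : R (R u) = R u := idem_apply_mem_range hR (LinearMap.mem_range_self _ u)
      simp only [LinearMap.mem_ker, ContinuousLinearMap.coe_coe]
      rw [this, h3, sub_self]
    exact Submodule.mem_sup.mpr ⟨R u, h1, u - R u, h2, by abel⟩

lemma idem_range_one_sub {R : L} (hR : R ∘L R = R) :
    LinearMap.range ((1 - R : L) : EuclideanSpace ℝ (Fin d) →ₗ[ℝ] EuclideanSpace ℝ (Fin d)) = LinearMap.ker (R : EuclideanSpace ℝ (Fin d) →ₗ[ℝ] EuclideanSpace ℝ (Fin d)) := by
  ext v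
  constructor
  · rintro ⟨u, rfl⟩
    have : R ((1 - R) u) = R u - R (R u) := by
      simp [ContinuousLinearMap.sub_apply, map_sub]
    have h3 : R (R u) = R u := idem_apply_mem_range hR (LinearMap.mem_range_self _ u)
    simp only [LinearMap.mem_ker, ContinuousLinearMap.coe_coe]
    rw [this, h3, sub_self]
  · intro hv
    refine ⟨v, ?_⟩
    have : R v = 0 := hv
    simp [ContinuousLinearMap.sub_apply, this]

lemma idem_one_sub {R : L} (hR : R ∘L R = R) : (1 - R) ∘L (1 - R) = 1 - R := by
  have hR' : R * R = R := hR
  show (1 - R) * (1 - R) = 1 - R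
  rw [sub_mul, one_mul, mul_sub, mul_one, hR', sub_self, sub_zero]

lemma idem_ext {R₁ R₂ : L} (h1 : R₁ ∘L R₁ = R₁) (h2 : R₂ ∘L R₂ = R₂)
    (hr : LinearMap.range (R₁ : EuclideanSpace ℝ (Fin d) →ₗ[ℝ] EuclideanSpace ℝ (Fin d)) = LinearMap.range (R₂ : EuclideanSpace ℝ (Fin d) →ₗ[ℝ] EuclideanSpace ℝ (Fin d)))
    (hk : LinearMap.ker (R₁ : EuclideanSpace ℝ (Fin d) →ₗ[ℝ] EuclideanSpace ℝ (Fin d)) = LinearMap.ker (R₂ : EuclideanSpace ℝ (Fin d) →ₗ[ℝ] EuclideanSpace ℝ (Fin d))) : R₁ = R₂ := by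
  ext u
  obtain ⟨v, w, hv, hw, hvw⟩ :=
    Submodule.codisjoint_iff_exists_add_eq.mp (idem_isCompl h1).codisjoint u
  have hA1 : R₁ u = v := by
    rw [← hvw, map_add, idem_apply_mem_range h1 hv, (show R₁ w = 0 from hw), add_zero]
  have hA2 : R₂ u = v := by
    have hv2 : v ∈ LinearMap.range (R₂ : EuclideanSpace ℝ (Fin d) →ₗ[ℝ] EuclideanSpace ℝ (Fin d)) := hr ▸ hv
    have hw2 : w ∈ LinearMap.ker (R₂ : EuclideanSpace ℝ (Fin d) →ₗ[ℝ] EuclideanSpace ℝ (Fin d)) := hk ▸ hw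
    rw [← hvw, map_add, idem_apply_mem_range h2 hv2, (show R₂ w = 0 from hw2), add_zero]
  rw [hA1, hA2]

/- ### conjugation lemmas -/

lemma conj_ker {B R : L} (hB : IsUnit B) :
    LinearMap.ker (B ∘L R ∘L Ring.inverse B : EuclideanSpace ℝ (Fin d) →ₗ[ℝ] EuclideanSpace ℝ (Fin d)) = (LinearMap.ker (R : EuclideanSpace ℝ (Fin d) →ₗ[ℝ] EuclideanSpace ℝ (Fin d))).map (B : V →ₗ[ℝ] V) := by
  ext v
  simp only [LinearMap.mem_ker, Submodule.mem_map]
  constructor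
  · intro hv
    refine ⟨Ring.inverse B v, ?_, apply_inv_apply hB v⟩
    have : B (R (Ring.inverse B v)) = 0 := hv
    exact unit_injective hB this
  · rintro ⟨w, hw, rfl⟩
    show B (R (Ring.inverse B (B w))) = 0
    rw [inv_apply_apply hB, (show R w = 0 from hw), map_zero]

lemma conj_range {B R : L} (hB : IsUnit B) :
    LinearMap.range (B ∘L R ∘L Ring.inverse B : EuclideanSpace ℝ (Fin d) →ₗ[ℝ] EuclideanSpace ℝ (Fin d)) = (LinearMap.range (R : EuclideanSpace ℝ (Fin d) →ₗ[ℝ] EuclideanSpace ℝ (Fin d))).map (B : V →ₗ[ℝ] V) := by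
  ext v
  simp only [LinearMap.mem_range, Submodule.mem_map]
  constructor
  · rintro ⟨u, rfl⟩
    exact ⟨R (Ring.inverse B u), ⟨_, rfl⟩, rfl⟩
  · rintro ⟨w, ⟨u, rfl⟩, rfl⟩
    exact ⟨B u, by simp [inv_apply_apply hB]⟩

lemma conj_idem {B R : L} (hB : IsUnit B) (hR : R ∘L R = R) :
    (B ∘L R ∘L Ring.inverse B) ∘L (B ∘L R ∘L Ring.inverse B) = B ∘L R ∘L Ring.inverse B := by
  have h := inv_comp_cancel hB
  calc (B ∘L R ∘L Ring.inverse B) ∘L (B ∘L R ∘L Ring.inverse B)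
      = B ∘L R ∘L (Ring.inverse B ∘L B) ∘L R ∘L Ring.inverse B := by
        simp only [ContinuousLinearMap.comp_assoc]
    _ = B ∘L (R ∘L R) ∘L Ring.inverse B := by
        rw [h]; simp only [ContinuousLinearMap.comp_assoc, ContinuousLinearMap.id_comp,
          ContinuousLinearMap.one_def]
    _ = B ∘L R ∘L Ring.inverse B := by rw [hR]



lemma tendsto_apply₂ {Tseq : ℕ → L} {T : L} {vseq : ℕ → V} {v : V}
    (hT : Tendsto Tseq atTop (𝓝 T)) (hv : Tendsto vseq atTop (𝓝 v)) :
    Tendsto (fun j => Tseq j (vseq j)) atTop (𝓝 (T v)) := by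
  have hc : Continuous fun p : (V →L[ℝ] V) × V => p.1 p.2 :=
    isBoundedBilinearMap_apply.continuous
  exact (hc.tendsto (T, v)).comp (hT.prodMk_nhds hv)

lemma rank_le_of_tendsto {Pseq : ℕ → L} {R : L} (h : Tendsto Pseq atTop (𝓝 R)) {r : ℕ}
    (hr : ∀ j, Module.finrank ℝ (LinearMap.range (Pseq j : EuclideanSpace ℝ (Fin d) →ₗ[ℝ] EuclideanSpace ℝ (Fin d))) ≤ r) :
    Module.finrank ℝ (LinearMap.range (R : EuclideanSpace ℝ (Fin d) →ₗ[ℝ] EuclideanSpace ℝ (Fin d))) ≤ r := by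
  set s := Module.finrank ℝ (LinearMap.range (R : EuclideanSpace ℝ (Fin d) →ₗ[ℝ] EuclideanSpace ℝ (Fin d))) with hs
  let b := Module.finBasis ℝ ↥(LinearMap.range (R : EuclideanSpace ℝ (Fin d) →ₗ[ℝ] EuclideanSpace ℝ (Fin d)))
  have hmem : ∀ i : Fin s, ((b i : V)) ∈ LinearMap.range (R : EuclideanSpace ℝ (Fin d) →ₗ[ℝ] EuclideanSpace ℝ (Fin d)) := fun i => (b i).2
  choose u hu using fun i => hmem i
  set v : Fin s → V := fun i => (b i : V) with hv
  have hvind : LinearIndependent ℝ v := by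
    have := b.linearIndependent
    have h2 := this.map' (LinearMap.range (R : EuclideanSpace ℝ (Fin d) →ₗ[ℝ] EuclideanSpace ℝ (Fin d))).subtype (Submodule.ker_subtype _)
    exact h2
  have hg : Tendsto (fun j => fun i => Pseq j (u i)) atTop (𝓝 v) := by
    rw [tendsto_pi_nhds]
    intro i
    have := tendsto_apply₂ h (tendsto_const_nhds (x := u i))
    rwa [← ContinuousLinearMap.coe_coe R, hu i] at this
  have hop : IsOpen {w : Fin s → V | LinearIndependent ℝ w} := isOpen_setOf_linearIndependent
  have hev := hg.eventually_mem (hop.mem_nhds hvind)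
  obtain ⟨j, hj⟩ := hev.exists
  have hjind : LinearIndependent ℝ (fun i => Pseq j (u i)) := hj
  have hle : Submodule.span ℝ (Set.range fun i => Pseq j (u i)) ≤ LinearMap.range (Pseq j : EuclideanSpace ℝ (Fin d) →ₗ[ℝ] EuclideanSpace ℝ (Fin d)) := by
    rw [Submodule.span_le]
    rintro w ⟨i, rfl⟩
    exact LinearMap.mem_range_self _ _
  have h1 : s = Module.finrank ℝ (Submodule.span ℝ (Set.range fun i => Pseq j (u i))) := by
    rw [finrank_span_eq_card hjind, Fintype.card_fin]
  calc s = _ := h1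
    _ ≤ Module.finrank ℝ (LinearMap.range (Pseq j : EuclideanSpace ℝ (Fin d) →ₗ[ℝ] EuclideanSpace ℝ (Fin d))) := Submodule.finrank_mono hle
    _ ≤ r := hr j

end Aux

section Aux2
variable {d : ℕ}
local notation "V" => EuclideanSpace ℝ (Fin d)
local notation "L" => V →L[ℝ] V

/-- Abstract uniqueness of dominated splittings. -/
lemma unique_dominated {lam : ℝ} (hl0 : 0 < lam) (hl1 : lam < 1)
    (B : ℕ → L) (hB : ∀ n, IsUnit (B n))
    {E₁ E₂ F₁ F₂ : Submodule ℝ V}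
    (hc₁ : IsCompl E₁ F₁) (hc₂ : IsCompl E₂ F₂)
    (hE : Module.finrank ℝ E₁ = Module.finrank ℝ E₂)
    (hE₁ : E₁ ≠ ⊥) (hE₂ : E₂ ≠ ⊥)
    (hdom₁ : ∀ n, subNorm (B n) E₁ *
      subNorm (Ring.inverse (B n)) (F₁.map (B n : V →ₗ[ℝ] V)) ≤ lam ^ n)
    (hdom₂ : ∀ n, subNorm (B n) E₂ *
      subNorm (Ring.inverse (B n)) (F₂.map (B n : V →ₗ[ℝ] V)) ≤ lam ^ n) :
    E₁ = E₂ := by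
  by_contra hne
  have hv : ∃ v ∈ E₂, v ∉ E₁ := by
    by_contra h; push_neg at h
    exact hne (Submodule.eq_of_le_of_finrank_le h hE.le).symm
  have hw : ∃ w ∈ E₁, w ∉ E₂ := by
    by_contra h; push_neg at h
    exact hne (Submodule.eq_of_le_of_finrank_le h hE.ge)
  obtain ⟨v, hv2, hv1⟩ := hv
  obtain ⟨w, hw1, hw2⟩ := hw
  obtain ⟨e₁, f₁, he₁, hf₁, hsum₁⟩ :=
    Submodule.codisjoint_iff_exists_add_eq.mp hc₁.codisjoint v
  obtain ⟨e₂, f₂, he₂, hf₂, hsum₂⟩ :=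
    Submodule.codisjoint_iff_exists_add_eq.mp hc₂.codisjoint w
  have hf₁0 : f₁ ≠ 0 := by
    intro h; exact hv1 (by rw [← hsum₁, h, add_zero]; exact he₁)
  have hf₂0 : f₂ ≠ 0 := by
    intro h; exact hw2 (by rw [← hsum₂, h, add_zero]; exact he₂)
  have hnf₁ : 0 < ‖f₁‖ := norm_pos_iff.mpr hf₁0
  have hnf₂ : 0 < ‖f₂‖ := norm_pos_iff.mpr hf₂0
  -- choose n
  set ε : ℝ := min (min (‖f₁‖ / (2 * (‖e₁‖ + 1))) (‖f₂‖ / (2 * (‖e₂‖ + 1))))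
    ((‖f₁‖ / 2 * (‖f₂‖ / 2)) / (‖v‖ * ‖w‖ + 1)) with hε
  have hεpos : 0 < ε := by
    apply lt_min (lt_min _ _) _ <;> positivity
  have htd := tendsto_pow_atTop_nhds_zero_of_lt_one hl0.le hl1
  have hev : ∀ᶠ n in atTop, lam ^ n < ε := by
    exact htd.eventually_lt_const hεpos
  obtain ⟨n, hn⟩ := hev.exists
  have hlamn0 : 0 ≤ lam ^ n := by positivity
  have hlamn1 : lam ^ n ≤ 1 := pow_le_one₀ hl0.le hl1.le
  have c1 : lam ^ n * ‖e₁‖ ≤ ‖f₁‖ / 2 := by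
    have h1 : ε ≤ ‖f₁‖ / (2 * (‖e₁‖ + 1)) := le_trans (min_le_left _ _) (min_le_left _ _)
    have h2 : lam ^ n * ‖e₁‖ ≤ ε * (‖e₁‖ + 1) :=
      mul_le_mul hn.le (by linarith [norm_nonneg e₁]) (norm_nonneg e₁) hεpos.le
    have h3 : ε * (‖e₁‖ + 1) ≤ ‖f₁‖ / (2 * (‖e₁‖ + 1)) * (‖e₁‖ + 1) :=
      mul_le_mul_of_nonneg_right h1 (by positivity)
    have h4 : ‖f₁‖ / (2 * (‖e₁‖ + 1)) * (‖e₁‖ + 1) = ‖f₁‖ / 2 := by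
      field_simp
    linarith
  have c2 : lam ^ n * ‖e₂‖ ≤ ‖f₂‖ / 2 := by
    have h1 : ε ≤ ‖f₂‖ / (2 * (‖e₂‖ + 1)) := le_trans (min_le_left _ _) (min_le_right _ _)
    have h2 : lam ^ n * ‖e₂‖ ≤ ε * (‖e₂‖ + 1) :=
      mul_le_mul hn.le (by linarith [norm_nonneg e₂]) (norm_nonneg e₂) hεpos.le
    have h3 : ε * (‖e₂‖ + 1) ≤ ‖f₂‖ / (2 * (‖e₂‖ + 1)) * (‖e₂‖ + 1) :=
      mul_le_mul_of_nonneg_right h1 (by positivity)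
    have h4 : ‖f₂‖ / (2 * (‖e₂‖ + 1)) * (‖e₂‖ + 1) = ‖f₂‖ / 2 := by
      field_simp
    linarith
  have c3 : lam ^ n * lam ^ n * ‖v‖ * ‖w‖ < ‖f₁‖ / 2 * (‖f₂‖ / 2) := by
    have h1 : ε ≤ (‖f₁‖ / 2 * (‖f₂‖ / 2)) / (‖v‖ * ‖w‖ + 1) := min_le_right _ _
    have h2 : lam ^ n * lam ^ n * ‖v‖ * ‖w‖ ≤ lam ^ n * (‖v‖ * ‖w‖ + 1) := by
      have hvw : 0 ≤ ‖v‖ * ‖w‖ := mul_nonneg (norm_nonneg v) (norm_nonneg w)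
      have h2a : lam ^ n * lam ^ n * ‖v‖ * ‖w‖ ≤ 1 * lam ^ n * ‖v‖ * ‖w‖ := by
        gcongr
      have h2b : 1 * lam ^ n * ‖v‖ * ‖w‖ = lam ^ n * (‖v‖ * ‖w‖) := by ring
      nlinarith [mul_nonneg hlamn0 hvw]
    have h3 : lam ^ n * (‖v‖ * ‖w‖ + 1) < ε * (‖v‖ * ‖w‖ + 1) := by
      apply mul_lt_mul_of_pos_right hn
      positivity
    have h4 : ε * (‖v‖ * ‖w‖ + 1) ≤ ‖f₁‖ / 2 * (‖f₂‖ / 2) := by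
      have := mul_le_mul_of_nonneg_right h1 (show (0:ℝ) ≤ ‖v‖ * ‖w‖ + 1 by positivity)
      calc ε * (‖v‖ * ‖w‖ + 1) ≤ (‖f₁‖ / 2 * (‖f₂‖ / 2)) / (‖v‖ * ‖w‖ + 1) * (‖v‖ * ‖w‖ + 1) := this
        _ = ‖f₁‖ / 2 * (‖f₂‖ / 2) := div_mul_cancel₀ _ (by positivity)
    linarith
  -- main inequalities
  set a₁ := subNorm (B n) E₁ with ha₁def
  set a₂ := subNorm (B n) E₂ with ha₂def
  set b₁ := subNorm (Ring.inverse (B n)) (F₁.map (B n : V →ₗ[ℝ] V)) with hb₁def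
  set b₂ := subNorm (Ring.inverse (B n)) (F₂.map (B n : V →ₗ[ℝ] V)) with hb₂def
  have ha₁pos : 0 < a₁ := subNorm_pos (hB n) hE₁
  have ha₂pos : 0 < a₂ := subNorm_pos (hB n) hE₂
  have hb₁0 : 0 ≤ b₁ := subNorm_nonneg _ _
  have hb₂0 : 0 ≤ b₂ := subNorm_nonneg _ _
  have key1 : ‖f₁‖ / 2 ≤ b₁ * (a₂ * ‖v‖) := by
    have hBf : (B n) f₁ ∈ F₁.map (B n : V →ₗ[ℝ] V) := Submodule.mem_map_of_mem hf₁
    have h2 : ‖f₁‖ ≤ b₁ * ‖(B n) f₁‖ := by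
      have := norm_le_subNorm (Ring.inverse (B n)) hBf
      rwa [inv_apply_apply (hB n)] at this
    have h4 : ‖(B n) f₁‖ ≤ ‖(B n) v‖ + ‖(B n) e₁‖ := by
      have : (B n) f₁ = (B n) v - (B n) e₁ := by rw [← hsum₁, map_add]; abel
      rw [this]; exact norm_sub_le _ _
    have h1 : ‖(B n) v‖ ≤ a₂ * ‖v‖ := norm_le_subNorm _ hv2
    have h3 : ‖(B n) e₁‖ ≤ a₁ * ‖e₁‖ := norm_le_subNorm _ he₁
    have h5 : a₁ * b₁ ≤ lam ^ n := hdom₁ n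
    nlinarith [norm_nonneg e₁, mul_le_mul_of_nonneg_left h4 hb₁0,
      mul_le_mul_of_nonneg_left h1 hb₁0, mul_le_mul_of_nonneg_left h3 hb₁0,
      mul_le_mul_of_nonneg_right h5 (norm_nonneg e₁)]
  have key2 : ‖f₂‖ / 2 ≤ b₂ * (a₁ * ‖w‖) := by
    have hBf : (B n) f₂ ∈ F₂.map (B n : V →ₗ[ℝ] V) := Submodule.mem_map_of_mem hf₂
    have h2 : ‖f₂‖ ≤ b₂ * ‖(B n) f₂‖ := by
      have := norm_le_subNorm (Ring.inverse (B n)) hBf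
      rwa [inv_apply_apply (hB n)] at this
    have h4 : ‖(B n) f₂‖ ≤ ‖(B n) w‖ + ‖(B n) e₂‖ := by
      have : (B n) f₂ = (B n) w - (B n) e₂ := by rw [← hsum₂, map_add]; abel
      rw [this]; exact norm_sub_le _ _
    have h1 : ‖(B n) w‖ ≤ a₁ * ‖w‖ := norm_le_subNorm _ hw1
    have h3 : ‖(B n) e₂‖ ≤ a₂ * ‖e₂‖ := norm_le_subNorm _ he₂
    have h5 : a₂ * b₂ ≤ lam ^ n := hdom₂ n
    nlinarith [norm_nonneg e₂, mul_le_mul_of_nonneg_left h4 hb₂0,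
      mul_le_mul_of_nonneg_left h1 hb₂0, mul_le_mul_of_nonneg_left h3 hb₂0,
      mul_le_mul_of_nonneg_right h5 (norm_nonneg e₂)]
  -- combine
  have k1 : a₁ * (‖f₁‖ / 2) ≤ lam ^ n * (a₂ * ‖v‖) := by
    have := mul_le_mul_of_nonneg_left key1 ha₁pos.le
    have h5 : a₁ * b₁ ≤ lam ^ n := hdom₁ n
    nlinarith [mul_nonneg ha₂pos.le (norm_nonneg v)]
  have k2 : a₂ * (‖f₂‖ / 2) ≤ lam ^ n * (a₁ * ‖w‖) := by
    have := mul_le_mul_of_nonneg_left key2 ha₂pos.le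
    have h5 : a₂ * b₂ ≤ lam ^ n := hdom₂ n
    nlinarith [mul_nonneg ha₁pos.le (norm_nonneg w)]
  have t1 := mul_le_mul k1 k2 (by positivity) (by positivity)
  have t2 := mul_lt_mul_of_pos_left c3 (mul_pos ha₁pos ha₂pos)
  nlinarith [t1, t2]

/-- Passing a domination estimate to limits. -/
lemma limit_dom {c : ℝ} (hc : 0 ≤ c) {T₁ T₂ : L} {Tseq₁ Tseq₂ Pi₁ Pi₂ : ℕ → L} {R₁ R₂ : L}
    (hT₁ : Tendsto Tseq₁ atTop (𝓝 T₁)) (hT₂ : Tendsto Tseq₂ atTop (𝓝 T₂))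
    (hPi₁ : Tendsto Pi₁ atTop (𝓝 R₁)) (hPi₂ : Tendsto Pi₂ atTop (𝓝 R₂))
    (hR₁ : R₁ ∘L R₁ = R₁) (hPidem : ∀ j, Pi₂ j ∘L Pi₂ j = Pi₂ j)
    (hj : ∀ j, subNorm (Tseq₁ j) (LinearMap.range (Pi₁ j : EuclideanSpace ℝ (Fin d) →ₗ[ℝ] EuclideanSpace ℝ (Fin d))) *
      subNorm (Tseq₂ j) (LinearMap.ker (Pi₂ j : EuclideanSpace ℝ (Fin d) →ₗ[ℝ] EuclideanSpace ℝ (Fin d))) ≤ c) :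
    subNorm T₁ (LinearMap.range (R₁ : EuclideanSpace ℝ (Fin d) →ₗ[ℝ] EuclideanSpace ℝ (Fin d))) * subNorm T₂ (LinearMap.ker (R₂ : EuclideanSpace ℝ (Fin d) →ₗ[ℝ] EuclideanSpace ℝ (Fin d))) ≤ c := by
  have key : ∀ v ∈ LinearMap.range (R₁ : EuclideanSpace ℝ (Fin d) →ₗ[ℝ] EuclideanSpace ℝ (Fin d)), ∀ w ∈ LinearMap.ker (R₂ : EuclideanSpace ℝ (Fin d) →ₗ[ℝ] EuclideanSpace ℝ (Fin d)),
      ‖T₁ v‖ * ‖T₂ w‖ ≤ c * (‖v‖ * ‖w‖) := by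
    intro v hv w hw
    have hv1 : Tendsto (fun j => Pi₁ j v) atTop (𝓝 v) := by
      have := tendsto_apply₂ hPi₁ (tendsto_const_nhds (x := v))
      rwa [idem_apply_mem_range hR₁ hv] at this
    have hw1 : Tendsto (fun j => w - Pi₂ j w) atTop (𝓝 w) := by
      have h0 := tendsto_apply₂ hPi₂ (tendsto_const_nhds (x := w))
      rw [show R₂ w = 0 from hw] at h0
      have h1 := (tendsto_const_nhds (x := w) (f := (atTop : Filter ℕ))).sub h0
      simpa using h1
    have hg : Tendsto (fun j => ‖Tseq₁ j (Pi₁ j v)‖ * ‖Tseq₂ j (w - Pi₂ j w)‖) atTop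
        (𝓝 (‖T₁ v‖ * ‖T₂ w‖)) :=
      ((tendsto_apply₂ hT₁ hv1).norm.mul (tendsto_apply₂ hT₂ hw1).norm)
    have hh : Tendsto (fun j => c * (‖Pi₁ j v‖ * ‖w - Pi₂ j w‖)) atTop
        (𝓝 (c * (‖v‖ * ‖w‖))) := tendsto_const_nhds.mul (hv1.norm.mul hw1.norm)
    refine le_of_tendsto_of_tendsto' hg hh fun j => ?_
    have m1 : Pi₁ j v ∈ LinearMap.range (Pi₁ j : EuclideanSpace ℝ (Fin d) →ₗ[ℝ] EuclideanSpace ℝ (Fin d)) := LinearMap.mem_range_self _ _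
    have m2 : w - Pi₂ j w ∈ LinearMap.ker (Pi₂ j : EuclideanSpace ℝ (Fin d) →ₗ[ℝ] EuclideanSpace ℝ (Fin d)) := by
      simp only [LinearMap.mem_ker, ContinuousLinearMap.coe_coe]
      have h3 : Pi₂ j (Pi₂ j w) = Pi₂ j w :=
        idem_apply_mem_range (hPidem j) (LinearMap.mem_range_self _ _)
      rw [map_sub, h3, sub_self]
    have b1 := norm_le_subNorm (Tseq₁ j) m1
    have b2 := norm_le_subNorm (Tseq₂ j) m2
    calc ‖Tseq₁ j (Pi₁ j v)‖ * ‖Tseq₂ j (w - Pi₂ j w)‖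
        ≤ (subNorm (Tseq₁ j) (LinearMap.range (Pi₁ j : EuclideanSpace ℝ (Fin d) →ₗ[ℝ] EuclideanSpace ℝ (Fin d))) * ‖Pi₁ j v‖) *
          (subNorm (Tseq₂ j) (LinearMap.ker (Pi₂ j : EuclideanSpace ℝ (Fin d) →ₗ[ℝ] EuclideanSpace ℝ (Fin d))) * ‖w - Pi₂ j w‖) :=
          mul_le_mul b1 b2 (norm_nonneg _)
            (mul_nonneg (subNorm_nonneg _ _) (norm_nonneg _))
      _ = (subNorm (Tseq₁ j) (LinearMap.range (Pi₁ j : EuclideanSpace ℝ (Fin d) →ₗ[ℝ] EuclideanSpace ℝ (Fin d))) *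
            subNorm (Tseq₂ j) (LinearMap.ker (Pi₂ j : EuclideanSpace ℝ (Fin d) →ₗ[ℝ] EuclideanSpace ℝ (Fin d)))) * (‖Pi₁ j v‖ * ‖w - Pi₂ j w‖) := by
          ring
      _ ≤ c * (‖Pi₁ j v‖ * ‖w - Pi₂ j w‖) :=
          mul_le_mul_of_nonneg_right (hj j)
            (mul_nonneg (norm_nonneg _) (norm_nonneg _))
  by_cases hz : subNorm T₂ (LinearMap.ker (R₂ : EuclideanSpace ℝ (Fin d) →ₗ[ℝ] EuclideanSpace ℝ (Fin d))) = 0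
  · rw [hz, mul_zero]; exact hc
  have hb : 0 < subNorm T₂ (LinearMap.ker (R₂ : EuclideanSpace ℝ (Fin d) →ₗ[ℝ] EuclideanSpace ℝ (Fin d))) :=
    lt_of_le_of_ne (subNorm_nonneg _ _) (Ne.symm hz)
  rw [← le_div_iff₀ hb]
  apply subNorm_le_of_forall (div_nonneg hc hb.le)
  intro v hv
  rw [div_mul_eq_mul_div, le_div_iff₀ hb]
  by_cases hTv : ‖T₁ v‖ = 0
  · rw [hTv, zero_mul]; positivity
  have hTvpos : 0 < ‖T₁ v‖ := lt_of_le_of_ne (norm_nonneg _) (Ne.symm hTv)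
  rw [mul_comm, ← le_div_iff₀ hTvpos]
  apply subNorm_le_of_forall (by positivity)
  intro w hw
  rw [div_mul_eq_mul_div, le_div_iff₀ hTvpos]
  have := key v hv w hw
  nlinarith [this]

end Aux2

section MainA
variable {d : ℕ}
local notation "V" => EuclideanSpace ℝ (Fin d)
variable [MetricSpace X] [CompactSpace X] {f : X ≃ₜ X}
  {A : X → (EuclideanSpace ℝ (Fin d) →L[ℝ] EuclideanSpace ℝ (Fin d))}
  {S : Set X}
  {P : X → (EuclideanSpace ℝ (Fin d) →L[ℝ] EuclideanSpace ℝ (Fin d))}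

lemma iterate_symm_iterate (f : X ≃ₜ X) (n : ℕ) (x : X) :
    (f : X → X)^[n] ((f.symm : X → X)^[n] x) = x := by
  have h : Function.LeftInverse (f : X → X) (f.symm : X → X) := f.right_inv
  exact (h.iterate n) x

lemma mem_S_f (hS : (f : X → X) '' S = S) {x : X} (hx : x ∈ S) : (f : X → X) x ∈ S := by
  rw [← hS]; exact Set.mem_image_of_mem _ hx

lemma mem_S_iterate (hS : (f : X → X) '' S = S) (n : ℕ) {x : X} (hx : x ∈ S) :
    (f : X → X)^[n] x ∈ S := by
  induction n with
  | zero => simpa using hx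
  | succ n ih => rw [Function.iterate_succ_apply']; exact mem_S_f hS ih

lemma mem_S_symm (hS : (f : X → X) '' S = S) {x : X} (hx : x ∈ S) :
    (f.symm : X → X) x ∈ S := by
  rw [← hS] at hx
  obtain ⟨y, hy, rfl⟩ := hx
  simpa using hy

lemma mem_S_symm_iterate (hS : (f : X → X) '' S = S) (n : ℕ) {x : X} (hx : x ∈ S) :
    (f.symm : X → X)^[n] x ∈ S := by
  induction n with
  | zero => simpa using hx
  | succ n ih => rw [Function.iterate_succ_apply']; exact mem_S_symm hS ih

/-- Commutation of cocycle powers with the projections. -/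
lemma cpow_comm (hS : (f : X → X) '' S = S)
    (hPinv : ∀ x ∈ S, A x ∘L P x = P (f x) ∘L A x) (n : ℕ) :
    ∀ x ∈ S, cpow (f : X → X) A n x ∘L P x =
      P ((f : X → X)^[n] x) ∘L cpow (f : X → X) A n x := by
  induction n with
  | zero =>
      intro x hx
      simp [cpow_zero, ContinuousLinearMap.one_def, ContinuousLinearMap.comp_id,
        ContinuousLinearMap.id_comp]
  | succ n ih =>
      intro x hx
      have h1 : cpow (f : X → X) A (n+1) x = cpow (f : X → X) A n (f x) ∘L A x :=
        cpow_succ _ _ _ _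
      rw [h1, ContinuousLinearMap.comp_assoc, hPinv x hx, ← ContinuousLinearMap.comp_assoc,
        ih (f x) (mem_S_f hS hx), ContinuousLinearMap.comp_assoc,
        Function.iterate_succ_apply]

/-- Conjugation formula for the projections along the orbit. -/
lemma conj_P (hS : (f : X → X) '' S = S) (hAinv : ∀ x, IsUnit (A x))
    (hPinv : ∀ x ∈ S, A x ∘L P x = P (f x) ∘L A x) (n : ℕ) {x : X} (hx : x ∈ S) :
    P ((f : X → X)^[n] x) = cpow (f : X → X) A n x ∘L P x ∘L
      Ring.inverse (cpow (f : X → X) A n x) := by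
  have hU : IsUnit (cpow (f : X → X) A n x) := cpow_isUnit _ hAinv n x
  have h2 : (P ((f : X → X)^[n] x) ∘L cpow (f : X → X) A n x) ∘L
      Ring.inverse (cpow (f : X → X) A n x) = P ((f : X → X)^[n] x) := by
    rw [ContinuousLinearMap.comp_assoc, comp_inv_cancel hU]
    simp [ContinuousLinearMap.one_def, ContinuousLinearMap.comp_id]
  rw [← cpow_comm hS hPinv n x hx] at h2
  rw [← h2, ContinuousLinearMap.comp_assoc]

lemma P_idem_apply (hPproj : ∀ x ∈ S, P x ∘L P x = P x) {x : X} (hx : x ∈ S) (v : V) :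
    P x (P x v) = P x v := by
  have := DFunLike.congr_fun (hPproj x hx) v
  simpa using this

lemma mapsto_range (hS : (f : X → X) '' S = S) (hPproj : ∀ x ∈ S, P x ∘L P x = P x)
    (hPinv : ∀ x ∈ S, A x ∘L P x = P (f x) ∘L A x) (n : ℕ) {x : X} (hx : x ∈ S) :
    ∀ v ∈ LinearMap.range (P x : EuclideanSpace ℝ (Fin d) →ₗ[ℝ] EuclideanSpace ℝ (Fin d)),
      cpow (f : X → X) A n x v ∈ LinearMap.range (P ((f : X → X)^[n] x) : EuclideanSpace ℝ (Fin d) →ₗ[ℝ] EuclideanSpace ℝ (Fin d)) := by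
  intro v hv
  have h1 : P x v = v := idem_apply_mem_range (hPproj x hx) hv
  have h2 := DFunLike.congr_fun (cpow_comm hS hPinv n x hx) v
  simp only [ContinuousLinearMap.comp_apply] at h2
  rw [h1] at h2
  exact ⟨cpow (f : X → X) A n x v, h2.symm⟩

lemma mapsto_ker_inv (hS : (f : X → X) '' S = S) (hAinv : ∀ x, IsUnit (A x))
    (hPinv : ∀ x ∈ S, A x ∘L P x = P (f x) ∘L A x) (n : ℕ) {x : X} (hx : x ∈ S) :
    ∀ v ∈ LinearMap.ker (P ((f : X → X)^[n] x) : EuclideanSpace ℝ (Fin d) →ₗ[ℝ] EuclideanSpace ℝ (Fin d)),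
      Ring.inverse (cpow (f : X → X) A n x) v ∈ LinearMap.ker (P x : EuclideanSpace ℝ (Fin d) →ₗ[ℝ] EuclideanSpace ℝ (Fin d)) := by
  intro v hv
  have hU : IsUnit (cpow (f : X → X) A n x) := cpow_isUnit _ hAinv n x
  have h2 := DFunLike.congr_fun (cpow_comm hS hPinv n x hx)
    (Ring.inverse (cpow (f : X → X) A n x) v)
  simp only [ContinuousLinearMap.comp_apply] at h2
  rw [apply_inv_apply hU] at h2
  have h3 : P ((f : X → X)^[n] x) v = 0 := hv
  rw [h3] at h2
  simp only [LinearMap.mem_ker]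
  exact unit_injective hU h2

/-- `n`-step domination along the invariant set. -/
lemma Dn (hS : (f : X → X) '' S = S) (hAinv : ∀ x, IsUnit (A x))
    (hPproj : ∀ x ∈ S, P x ∘L P x = P x)
    (hPinv : ∀ x ∈ S, A x ∘L P x = P (f x) ∘L A x)
    {m : ℕ} {lam : ℝ} (hlam : lam ∈ Set.Ioo (0:ℝ) 1)
    (hdom' : ∀ x ∈ S, subNorm (cpow (f : X → X) A m x) (LinearMap.range (P x : EuclideanSpace ℝ (Fin d) →ₗ[ℝ] EuclideanSpace ℝ (Fin d))) *
      subNorm (Ring.inverse (cpow (f : X → X) A m x))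
        (LinearMap.ker (P ((f : X → X)^[m] x) : EuclideanSpace ℝ (Fin d) →ₗ[ℝ] EuclideanSpace ℝ (Fin d))) ≤ lam)
    (n : ℕ) : ∀ x ∈ S,
      subNorm (cpow (f : X → X) A (n*m) x) (LinearMap.range (P x : EuclideanSpace ℝ (Fin d) →ₗ[ℝ] EuclideanSpace ℝ (Fin d))) *
      subNorm (Ring.inverse (cpow (f : X → X) A (n*m) x))
        (LinearMap.ker (P ((f : X → X)^[n*m] x) : EuclideanSpace ℝ (Fin d) →ₗ[ℝ] EuclideanSpace ℝ (Fin d))) ≤ lam ^ n := by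
  induction n with
  | zero =>
      intro x hx
      simp only [Nat.zero_mul, pow_zero, cpow_zero, Function.iterate_zero, id_eq]
      have h1 := subNorm_one_le (LinearMap.range (P x : EuclideanSpace ℝ (Fin d) →ₗ[ℝ] EuclideanSpace ℝ (Fin d)))
      have h2 : subNorm (Ring.inverse (1 : V →L[ℝ] V)) (LinearMap.ker (P x : EuclideanSpace ℝ (Fin d) →ₗ[ℝ] EuclideanSpace ℝ (Fin d))) ≤ 1 := by
        rw [Ring.inverse_one]; exact subNorm_one_le _
      exact mul_le_one₀ h1 (subNorm_nonneg _ _) h2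
  | succ n ih =>
      intro x hx
      set y := (f : X → X)^[n*m] x with hy
      have hyS : y ∈ S := mem_S_iterate hS _ hx
      have harith : (n+1)*m = m + n*m := by ring
      have hsplit : cpow (f : X → X) A ((n+1)*m) x =
          cpow (f : X → X) A m y ∘L cpow (f : X → X) A (n*m) x := by
        rw [harith, cpow_add]
      have hit : (f : X → X)^[(n+1)*m] x = (f : X → X)^[m] y := by
        rw [harith, Function.iterate_add_apply]
      have hUy : IsUnit (cpow (f : X → X) A m y) := cpow_isUnit _ hAinv _ _
      have hUx : IsUnit (cpow (f : X → X) A (n*m) x) := cpow_isUnit _ hAinv _ _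
      have hinvsplit : Ring.inverse (cpow (f : X → X) A ((n+1)*m) x) =
          Ring.inverse (cpow (f : X → X) A (n*m) x) ∘L
            Ring.inverse (cpow (f : X → X) A m y) := by
        rw [hsplit, inverse_comp hUy hUx]
      -- forward factor
      have hfor : subNorm (cpow (f : X → X) A ((n+1)*m) x) (LinearMap.range (P x : EuclideanSpace ℝ (Fin d) →ₗ[ℝ] EuclideanSpace ℝ (Fin d))) ≤
          subNorm (cpow (f : X → X) A m y) (LinearMap.range (P y : EuclideanSpace ℝ (Fin d) →ₗ[ℝ] EuclideanSpace ℝ (Fin d))) *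
          subNorm (cpow (f : X → X) A (n*m) x) (LinearMap.range (P x : EuclideanSpace ℝ (Fin d) →ₗ[ℝ] EuclideanSpace ℝ (Fin d))) := by
        rw [hsplit]
        exact subNorm_comp_le (fun v hv => mapsto_range hS hPproj hPinv (n*m) hx v hv)
      -- backward factor
      have hback : subNorm (Ring.inverse (cpow (f : X → X) A ((n+1)*m) x))
          (LinearMap.ker (P ((f : X → X)^[(n+1)*m] x) : EuclideanSpace ℝ (Fin d) →ₗ[ℝ] EuclideanSpace ℝ (Fin d))) ≤
          subNorm (Ring.inverse (cpow (f : X → X) A (n*m) x)) (LinearMap.ker (P y : EuclideanSpace ℝ (Fin d) →ₗ[ℝ] EuclideanSpace ℝ (Fin d))) *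
          subNorm (Ring.inverse (cpow (f : X → X) A m y))
            (LinearMap.ker (P ((f : X → X)^[m] y) : EuclideanSpace ℝ (Fin d) →ₗ[ℝ] EuclideanSpace ℝ (Fin d))) := by
        rw [hinvsplit, hit]
        exact subNorm_comp_le (fun v hv => mapsto_ker_inv hS hAinv hPinv m hyS v hv)
      have h1 := hdom' y hyS
      have h2 := ih x hx
      have n1 : (0:ℝ) ≤ subNorm (cpow (f : X → X) A m y) (LinearMap.range (P y : EuclideanSpace ℝ (Fin d) →ₗ[ℝ] EuclideanSpace ℝ (Fin d))) :=
        subNorm_nonneg _ _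
      have n2 : (0:ℝ) ≤ subNorm (cpow (f : X → X) A (n*m) x) (LinearMap.range (P x : EuclideanSpace ℝ (Fin d) →ₗ[ℝ] EuclideanSpace ℝ (Fin d))) :=
        subNorm_nonneg _ _
      have n3 : (0:ℝ) ≤ subNorm (Ring.inverse (cpow (f : X → X) A (n*m) x))
          (LinearMap.ker (P y : EuclideanSpace ℝ (Fin d) →ₗ[ℝ] EuclideanSpace ℝ (Fin d))) := subNorm_nonneg _ _
      have n4 : (0:ℝ) ≤ subNorm (Ring.inverse (cpow (f : X → X) A m y))
          (LinearMap.ker (P ((f : X → X)^[m] y) : EuclideanSpace ℝ (Fin d) →ₗ[ℝ] EuclideanSpace ℝ (Fin d))) := subNorm_nonneg _ _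
      calc subNorm (cpow (f : X → X) A ((n+1)*m) x) (LinearMap.range (P x : EuclideanSpace ℝ (Fin d) →ₗ[ℝ] EuclideanSpace ℝ (Fin d))) *
            subNorm (Ring.inverse (cpow (f : X → X) A ((n+1)*m) x))
              (LinearMap.ker (P ((f : X → X)^[(n+1)*m] x) : EuclideanSpace ℝ (Fin d) →ₗ[ℝ] EuclideanSpace ℝ (Fin d)))
          ≤ (subNorm (cpow (f : X → X) A m y) (LinearMap.range (P y : EuclideanSpace ℝ (Fin d) →ₗ[ℝ] EuclideanSpace ℝ (Fin d))) *
             subNorm (cpow (f : X → X) A (n*m) x) (LinearMap.range (P x : EuclideanSpace ℝ (Fin d) →ₗ[ℝ] EuclideanSpace ℝ (Fin d)))) *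
            (subNorm (Ring.inverse (cpow (f : X → X) A (n*m) x)) (LinearMap.ker (P y : EuclideanSpace ℝ (Fin d) →ₗ[ℝ] EuclideanSpace ℝ (Fin d))) *
             subNorm (Ring.inverse (cpow (f : X → X) A m y))
               (LinearMap.ker (P ((f : X → X)^[m] y) : EuclideanSpace ℝ (Fin d) →ₗ[ℝ] EuclideanSpace ℝ (Fin d)))) := by
            apply mul_le_mul hfor hback (subNorm_nonneg _ _)
              (mul_nonneg n1 n2)
        _ = (subNorm (cpow (f : X → X) A m y) (LinearMap.range (P y : EuclideanSpace ℝ (Fin d) →ₗ[ℝ] EuclideanSpace ℝ (Fin d))) *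
             subNorm (Ring.inverse (cpow (f : X → X) A m y))
               (LinearMap.ker (P ((f : X → X)^[m] y) : EuclideanSpace ℝ (Fin d) →ₗ[ℝ] EuclideanSpace ℝ (Fin d)))) *
            (subNorm (cpow (f : X → X) A (n*m) x) (LinearMap.range (P x : EuclideanSpace ℝ (Fin d) →ₗ[ℝ] EuclideanSpace ℝ (Fin d))) *
             subNorm (Ring.inverse (cpow (f : X → X) A (n*m) x))
               (LinearMap.ker (P y : EuclideanSpace ℝ (Fin d) →ₗ[ℝ] EuclideanSpace ℝ (Fin d)))) := by ring
        _ ≤ lam * lam ^ n := by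
            apply mul_le_mul h1 h2 (mul_nonneg n2 n3) hlam.1.le
        _ = lam ^ (n+1) := by ring

end MainA

section ClusterDef
variable {d : ℕ}
/-- `R` is a cluster value of the projection family `P` (restricted to `S`) at `x`. -/
def IsClusterProj [TopologicalSpace X]
    (S : Set X) (P : X → (EuclideanSpace ℝ (Fin d) →L[ℝ] EuclideanSpace ℝ (Fin d)))
    (x : X) (R : EuclideanSpace ℝ (Fin d) →L[ℝ] EuclideanSpace ℝ (Fin d)) : Prop :=
  ∃ z : ℕ → X, (∀ j, z j ∈ S) ∧ Tendsto z atTop (𝓝 x) ∧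
    Tendsto (fun j => P (z j)) atTop (𝓝 R)

end ClusterDef

section MainB
variable {d : ℕ}
local notation "V" => EuclideanSpace ℝ (Fin d)
variable [MetricSpace X] [CompactSpace X] {f : X ≃ₜ X}
  {A : X → (EuclideanSpace ℝ (Fin d) →L[ℝ] EuclideanSpace ℝ (Fin d))}
  {S : Set X}
  {P : X → (EuclideanSpace ℝ (Fin d) →L[ℝ] EuclideanSpace ℝ (Fin d))}
  {k m : ℕ} {lam : ℝ} {K : ℝ}

lemma exists_bound_cont {g : X → (EuclideanSpace ℝ (Fin d) →L[ℝ] EuclideanSpace ℝ (Fin d))}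
    (hg : Continuous g) : ∃ C : ℝ, 1 ≤ C ∧ ∀ x, ‖g x‖ ≤ C := by
  obtain ⟨C, hC⟩ := (isCompact_range hg.norm).bddAbove
  exact ⟨max C 1, le_max_right _ _,
    fun x => le_trans (hC (Set.mem_range_self x)) (le_max_left _ _)⟩

lemma finrank_ker_P (hd : 1 ≤ d) (hk : k ≤ d)
    (hrank : ∀ x ∈ S, Module.finrank ℝ (LinearMap.range (P x : EuclideanSpace ℝ (Fin d) →ₗ[ℝ] EuclideanSpace ℝ (Fin d))) = k)
    {x : X} (hx : x ∈ S) :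
    Module.finrank ℝ (LinearMap.ker (P x : EuclideanSpace ℝ (Fin d) →ₗ[ℝ] EuclideanSpace ℝ (Fin d))) = d - k := by
  have h1 := LinearMap.finrank_range_add_finrank_ker ((P x) : V →ₗ[ℝ] V)
  have h2 : Module.finrank ℝ V = d := finrank_euclideanSpace_fin
  rw [h2] at h1
  have h3 := hrank x hx
  have e1 : LinearMap.range ((P x) : V →ₗ[ℝ] V) = LinearMap.range (P x : EuclideanSpace ℝ (Fin d) →ₗ[ℝ] EuclideanSpace ℝ (Fin d)) := rfl
  have e2 : LinearMap.ker ((P x) : V →ₗ[ℝ] V) = LinearMap.ker (P x : EuclideanSpace ℝ (Fin d) →ₗ[ℝ] EuclideanSpace ℝ (Fin d)) := rfl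
  rw [e1, e2] at h1
  omega

lemma ker_ne_bot_of_finrank {T : EuclideanSpace ℝ (Fin d) →L[ℝ] EuclideanSpace ℝ (Fin d)}
    {r : ℕ} (hr : 1 ≤ r) (h : Module.finrank ℝ (LinearMap.ker (T : EuclideanSpace ℝ (Fin d) →ₗ[ℝ] EuclideanSpace ℝ (Fin d))) = r) :
    LinearMap.ker (T : EuclideanSpace ℝ (Fin d) →ₗ[ℝ] EuclideanSpace ℝ (Fin d)) ≠ ⊥ := by
  intro hbot; rw [hbot, finrank_bot] at h; omega

lemma range_ne_bot_of_finrank {T : EuclideanSpace ℝ (Fin d) →L[ℝ] EuclideanSpace ℝ (Fin d)}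
    {r : ℕ} (hr : 1 ≤ r) (h : Module.finrank ℝ (LinearMap.range (T : EuclideanSpace ℝ (Fin d) →ₗ[ℝ] EuclideanSpace ℝ (Fin d))) = r) :
    LinearMap.range (T : EuclideanSpace ℝ (Fin d) →ₗ[ℝ] EuclideanSpace ℝ (Fin d)) ≠ ⊥ := by
  intro hbot; rw [hbot, finrank_bot] at h; omega

/-- Uniform bound on the norms of the projections, from domination. -/
lemma exists_K (hS : (f : X → X) '' S = S) (hAcont : Continuous A)
    (hAinv : ∀ x, IsUnit (A x))
    (hPproj : ∀ x ∈ S, P x ∘L P x = P x)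
    (hPinv : ∀ x ∈ S, A x ∘L P x = P (f x) ∘L A x)
    (hd : 1 ≤ d) (hk1 : 1 ≤ k) (hkd : k + 1 ≤ d)
    (hrank : ∀ x ∈ S, Module.finrank ℝ (LinearMap.range (P x : EuclideanSpace ℝ (Fin d) →ₗ[ℝ] EuclideanSpace ℝ (Fin d))) = k)
    (hlam : lam ∈ Set.Ioo (0:ℝ) 1)
    (hdom' : ∀ x ∈ S, subNorm (cpow (f : X → X) A m x) (LinearMap.range (P x : EuclideanSpace ℝ (Fin d) →ₗ[ℝ] EuclideanSpace ℝ (Fin d))) *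
      subNorm (Ring.inverse (cpow (f : X → X) A m x))
        (LinearMap.ker (P ((f : X → X)^[m] x) : EuclideanSpace ℝ (Fin d) →ₗ[ℝ] EuclideanSpace ℝ (Fin d))) ≤ lam) :
    ∃ K : ℝ, 1 ≤ K ∧ ∀ x ∈ S, ‖P x‖ ≤ K := by
  obtain ⟨n₀, hn₀⟩ :=
    ((tendsto_pow_atTop_nhds_zero_of_lt_one hlam.1.le hlam.2).eventually_lt_const
      (show (0:ℝ) < 1/4 by norm_num)).exists
  set N := n₀ * m with hN
  obtain ⟨C₁, hC₁1, hC₁⟩ := exists_bound_cont (cpow_continuous f.continuous hAcont N)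
  obtain ⟨C₂, hC₂1, hC₂⟩ :=
    exists_bound_cont (cpow_inv_continuous f.continuous hAcont hAinv N)
  refine ⟨max 2 (4 * C₁ * C₂), le_trans (by norm_num) (le_max_left _ _), ?_⟩
  intro x hx
  apply ContinuousLinearMap.opNorm_le_bound _ (by positivity)
  intro u
  set e := P x u with he
  set g := u - P x u with hg
  have hemem : e ∈ LinearMap.range (P x : EuclideanSpace ℝ (Fin d) →ₗ[ℝ] EuclideanSpace ℝ (Fin d)) := LinearMap.mem_range_self _ _
  have hgmem : g ∈ LinearMap.ker (P x : EuclideanSpace ℝ (Fin d) →ₗ[ℝ] EuclideanSpace ℝ (Fin d)) := by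
    simp only [LinearMap.mem_ker, hg, map_sub, ContinuousLinearMap.coe_coe]
    rw [P_idem_apply hPproj hx u, sub_self]
  by_cases hcase : ‖e‖ ≤ 2 * ‖u‖
  · calc ‖P x u‖ = ‖e‖ := rfl
      _ ≤ 2 * ‖u‖ := hcase
      _ ≤ max 2 (4 * C₁ * C₂) * ‖u‖ :=
          mul_le_mul_of_nonneg_right (le_max_left _ _) (norm_nonneg _)
  push_neg at hcase
  set B := cpow (f : X → X) A N x with hB
  have hUB : IsUnit B := cpow_isUnit _ hAinv _ _
  set a := subNorm B (LinearMap.range (P x : EuclideanSpace ℝ (Fin d) →ₗ[ℝ] EuclideanSpace ℝ (Fin d))) with ha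
  set b := subNorm (Ring.inverse B) (LinearMap.ker (P ((f : X → X)^[N] x) : EuclideanSpace ℝ (Fin d) →ₗ[ℝ] EuclideanSpace ℝ (Fin d))) with hb
  have hab : a * b ≤ lam ^ n₀ := Dn hS hAinv hPproj hPinv hlam hdom' n₀ x hx
  have hab4 : a * b ≤ 1/4 := le_trans hab hn₀.le
  have ha0 : 0 ≤ a := subNorm_nonneg _ _
  have hb0 : 0 ≤ b := subNorm_nonneg _ _
  have hbC₂ : b ≤ C₂ := le_trans (subNorm_le_norm _ _) (hC₂ x)
  -- forward images
  have hBg : B g ∈ LinearMap.ker (P ((f : X → X)^[N] x) : EuclideanSpace ℝ (Fin d) →ₗ[ℝ] EuclideanSpace ℝ (Fin d)) := by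
    have h2 := DFunLike.congr_fun (cpow_comm hS hPinv N x hx) g
    simp only [ContinuousLinearMap.comp_apply] at h2
    have h3 : P x g = 0 := hgmem
    rw [h3, map_zero] at h2
    exact h2.symm
  have h1 : ‖g‖ ≤ b * ‖B g‖ := by
    have := norm_le_subNorm (Ring.inverse B) hBg
    rwa [inv_apply_apply hUB] at this
  have h2 : ‖B e‖ ≤ a * ‖e‖ := norm_le_subNorm _ hemem
  have h3 : ‖B g‖ ≤ ‖B u‖ + ‖B e‖ := by
    have hsum : B g = B u - B e := by rw [hg, map_sub]
    rw [hsum]; exact norm_sub_le _ _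
  have h4 : ‖B u‖ ≤ C₁ * ‖u‖ :=
    le_trans (B.le_opNorm u) (mul_le_mul_of_nonneg_right (hC₁ x) (norm_nonneg _))
  have h5 : ‖e‖ - ‖u‖ ≤ ‖g‖ := by
    have := norm_sub_norm_le u e
    have h6 : ‖g‖ = ‖u - e‖ := rfl
    rw [h6]
    have := abs_norm_sub_norm_le u e
    calc ‖e‖ - ‖u‖ ≤ |‖u‖ - ‖e‖| := by rw [abs_sub_comm]; exact le_abs_self _
      _ ≤ ‖u - e‖ := abs_norm_sub_norm_le u e
  -- combine: b * ‖B u‖ ≥ ‖g‖ - a*b*‖e‖ ≥ (‖e‖ - ‖u‖) - (1/4)‖e‖ ≥ ‖e‖/4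
  have hc1 : ‖g‖ ≤ b * ‖B u‖ + b * ‖B e‖ := by nlinarith
  have hc2 : b * ‖B e‖ ≤ (1/4) * ‖e‖ := by nlinarith [norm_nonneg e, norm_nonneg (B e)]
  have hc3 : b * ‖B u‖ ≤ C₂ * (C₁ * ‖u‖) := by
    apply mul_le_mul hbC₂ h4 (norm_nonneg _) (by linarith)
  have hc4 : ‖e‖ / 4 ≤ C₂ * (C₁ * ‖u‖) := by nlinarith
  calc ‖P x u‖ = ‖e‖ := rfl
    _ ≤ 4 * C₁ * C₂ * ‖u‖ := by nlinarith
    _ ≤ max 2 (4 * C₁ * C₂) * ‖u‖ :=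
        mul_le_mul_of_nonneg_right (le_max_right _ _) (norm_nonneg _)

/-- Existence of cluster values. -/
lemma cluster_exists (hK : ∀ x ∈ S, ‖P x‖ ≤ K) {x : X} (hx : x ∈ closure S) :
    ∃ R, IsClusterProj S P x R := by
  obtain ⟨z, hzS, hzx⟩ := mem_closure_iff_seq_limit.mp hx
  have hball : ∀ j, P (z j) ∈ Metric.closedBall (0 : V →L[ℝ] V) K := fun j => by
    simpa [Metric.mem_closedBall, dist_zero_right] using hK (z j) (hzS j)
  obtain ⟨R, _, φ, hφ, hconv⟩ :=
    (isCompact_closedBall (0 : V →L[ℝ] V) K).tendsto_subseq hball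
  exact ⟨R, z ∘ φ, fun j => hzS _, hzx.comp hφ.tendsto_atTop, hconv⟩

lemma cluster_idem (hPproj : ∀ x ∈ S, P x ∘L P x = P x) {x : X}
    {R : EuclideanSpace ℝ (Fin d) →L[ℝ] EuclideanSpace ℝ (Fin d)}
    (hcl : IsClusterProj S P x R) : R ∘L R = R := by
  obtain ⟨z, hzS, hzx, hPz⟩ := hcl
  have h1 : Tendsto (fun j => P (z j) * P (z j)) atTop (𝓝 (R * R)) := hPz.mul hPz
  have h2 : (fun j => P (z j) * P (z j)) = fun j => P (z j) :=
    funext fun j => (ContinuousLinearMap.mul_def _ _).trans (hPproj _ (hzS j))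
  rw [h2] at h1
  have h3 : R * R = R := tendsto_nhds_unique h1 hPz
  rw [ContinuousLinearMap.mul_def] at h3
  exact h3

lemma cluster_rank (hPproj : ∀ x ∈ S, P x ∘L P x = P x)
    (hrank : ∀ x ∈ S, Module.finrank ℝ (LinearMap.range (P x : EuclideanSpace ℝ (Fin d) →ₗ[ℝ] EuclideanSpace ℝ (Fin d))) = k)
    (hd : 1 ≤ d) (hk : k ≤ d) {x : X}
    {R : EuclideanSpace ℝ (Fin d) →L[ℝ] EuclideanSpace ℝ (Fin d)}
    (hcl : IsClusterProj S P x R) :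
    Module.finrank ℝ (LinearMap.range (R : EuclideanSpace ℝ (Fin d) →ₗ[ℝ] EuclideanSpace ℝ (Fin d))) = k ∧
      Module.finrank ℝ (LinearMap.ker (R : EuclideanSpace ℝ (Fin d) →ₗ[ℝ] EuclideanSpace ℝ (Fin d))) = d - k := by
  have hRid : R ∘L R = R := cluster_idem hPproj hcl
  obtain ⟨z, hzS, hzx, hPz⟩ := hcl
  have hr1 : Module.finrank ℝ (LinearMap.range (R : EuclideanSpace ℝ (Fin d) →ₗ[ℝ] EuclideanSpace ℝ (Fin d))) ≤ k :=
    rank_le_of_tendsto hPz fun j => (hrank _ (hzS j)).le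
  have hseq : Tendsto (fun j => 1 - P (z j)) atTop (𝓝 (1 - R)) :=
    tendsto_const_nhds.sub hPz
  have hr2 : Module.finrank ℝ (LinearMap.ker (R : EuclideanSpace ℝ (Fin d) →ₗ[ℝ] EuclideanSpace ℝ (Fin d))) ≤ d - k := by
    have h1 : ∀ j, Module.finrank ℝ (LinearMap.range ((1 - P (z j) : EuclideanSpace ℝ (Fin d) →L[ℝ] EuclideanSpace ℝ (Fin d)) : EuclideanSpace ℝ (Fin d) →ₗ[ℝ] EuclideanSpace ℝ (Fin d))) ≤ d - k := fun j => by
      rw [idem_range_one_sub (hPproj _ (hzS j))]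
      exact (finrank_ker_P hd hk hrank (hzS j)).le
    have h2 := rank_le_of_tendsto hseq h1
    rwa [idem_range_one_sub hRid] at h2
  have hsum := LinearMap.finrank_range_add_finrank_ker (R : V →ₗ[ℝ] V)
  have h2 : Module.finrank ℝ V = d := finrank_euclideanSpace_fin
  rw [h2] at hsum
  have e1 : LinearMap.range (R : V →ₗ[ℝ] V) = LinearMap.range (R : EuclideanSpace ℝ (Fin d) →ₗ[ℝ] EuclideanSpace ℝ (Fin d)) := rfl
  have e2 : LinearMap.ker (R : V →ₗ[ℝ] V) = LinearMap.ker (R : EuclideanSpace ℝ (Fin d) →ₗ[ℝ] EuclideanSpace ℝ (Fin d)) := rfl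
  rw [e1, e2] at hsum
  omega

/-- Forward domination for cluster values. -/
lemma cluster_fdom (hS : (f : X → X) '' S = S) (hAcont : Continuous A)
    (hAinv : ∀ x, IsUnit (A x))
    (hPproj : ∀ x ∈ S, P x ∘L P x = P x)
    (hPinv : ∀ x ∈ S, A x ∘L P x = P (f x) ∘L A x)
    (hlam : lam ∈ Set.Ioo (0:ℝ) 1)
    (hdom' : ∀ x ∈ S, subNorm (cpow (f : X → X) A m x) (LinearMap.range (P x : EuclideanSpace ℝ (Fin d) →ₗ[ℝ] EuclideanSpace ℝ (Fin d))) *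
      subNorm (Ring.inverse (cpow (f : X → X) A m x))
        (LinearMap.ker (P ((f : X → X)^[m] x) : EuclideanSpace ℝ (Fin d) →ₗ[ℝ] EuclideanSpace ℝ (Fin d))) ≤ lam)
    {x : X} {R : EuclideanSpace ℝ (Fin d) →L[ℝ] EuclideanSpace ℝ (Fin d)}
    (hcl : IsClusterProj S P x R) (n : ℕ) :
    subNorm (cpow (f : X → X) A (n*m) x) (LinearMap.range (R : EuclideanSpace ℝ (Fin d) →ₗ[ℝ] EuclideanSpace ℝ (Fin d))) *
      subNorm (Ring.inverse (cpow (f : X → X) A (n*m) x))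
        ((LinearMap.ker (R : EuclideanSpace ℝ (Fin d) →ₗ[ℝ] EuclideanSpace ℝ (Fin d))).map ((cpow (f : X → X) A (n*m) x : V →ₗ[ℝ] V))) ≤ lam ^ n := by
  have hRid : R ∘L R = R := cluster_idem hPproj hcl
  obtain ⟨z, hzS, hzx, hPz⟩ := hcl
  set B := cpow (f : X → X) A (n*m) x with hBdef
  have hUB : IsUnit B := cpow_isUnit _ hAinv _ _
  rw [← conj_ker (R := R) hUB]
  have ht1 : Tendsto (fun j => cpow (f : X → X) A (n*m) (z j)) atTop (𝓝 B) :=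
    ((cpow_continuous f.continuous hAcont (n*m)).tendsto x).comp hzx
  have ht2 : Tendsto (fun j => Ring.inverse (cpow (f : X → X) A (n*m) (z j))) atTop
      (𝓝 (Ring.inverse B)) :=
    ((cpow_inv_continuous f.continuous hAcont hAinv (n*m)).tendsto x).comp hzx
  have hPi2 : Tendsto (fun j => P ((f : X → X)^[n*m] (z j))) atTop
      (𝓝 (B ∘L R ∘L Ring.inverse B)) := by
    have hconv : Tendsto (fun j => cpow (f : X → X) A (n*m) (z j) *
        (P (z j) * Ring.inverse (cpow (f : X → X) A (n*m) (z j)))) atTop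
        (𝓝 (B * (R * Ring.inverse B))) := ht1.mul (hPz.mul ht2)
    have heq : ∀ j, P ((f : X → X)^[n*m] (z j)) = cpow (f : X → X) A (n*m) (z j) *
        (P (z j) * Ring.inverse (cpow (f : X → X) A (n*m) (z j))) := fun j => by
      rw [conj_P hS hAinv hPinv (n*m) (hzS j)]; rfl
    have hfin : B * (R * Ring.inverse B) = B ∘L R ∘L Ring.inverse B := rfl
    rw [hfin] at hconv
    exact hconv.congr (fun j => (heq j).symm)
  exact limit_dom (pow_nonneg hlam.1.le n) ht1 ht2 hPz hPi2 hRid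
    (fun j => hPproj _ (mem_S_iterate hS (n*m) (hzS j)))
    (fun j => Dn hS hAinv hPproj hPinv hlam hdom' n (z j) (hzS j))

/-- Backward domination for cluster values. -/
lemma cluster_bdom (hS : (f : X → X) '' S = S) (hAcont : Continuous A)
    (hAinv : ∀ x, IsUnit (A x))
    (hPproj : ∀ x ∈ S, P x ∘L P x = P x)
    (hPinv : ∀ x ∈ S, A x ∘L P x = P (f x) ∘L A x)
    (hlam : lam ∈ Set.Ioo (0:ℝ) 1)
    (hdom' : ∀ x ∈ S, subNorm (cpow (f : X → X) A m x) (LinearMap.range (P x : EuclideanSpace ℝ (Fin d) →ₗ[ℝ] EuclideanSpace ℝ (Fin d))) *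
      subNorm (Ring.inverse (cpow (f : X → X) A m x))
        (LinearMap.ker (P ((f : X → X)^[m] x) : EuclideanSpace ℝ (Fin d) →ₗ[ℝ] EuclideanSpace ℝ (Fin d))) ≤ lam)
    {x : X} {R : EuclideanSpace ℝ (Fin d) →L[ℝ] EuclideanSpace ℝ (Fin d)}
    (hcl : IsClusterProj S P x R) (n : ℕ) :
    subNorm (cpow (f : X → X) A (n*m) ((f.symm : X → X)^[n*m] x))
      ((LinearMap.range (R : EuclideanSpace ℝ (Fin d) →ₗ[ℝ] EuclideanSpace ℝ (Fin d))).map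
        (((Ring.inverse (cpow (f : X → X) A (n*m) ((f.symm : X → X)^[n*m] x)) :
          EuclideanSpace ℝ (Fin d) →L[ℝ] EuclideanSpace ℝ (Fin d)) : V →ₗ[ℝ] V))) *
    subNorm (Ring.inverse (cpow (f : X → X) A (n*m) ((f.symm : X → X)^[n*m] x)))
      (LinearMap.ker (R : EuclideanSpace ℝ (Fin d) →ₗ[ℝ] EuclideanSpace ℝ (Fin d))) ≤ lam ^ n := by
  have hRid : R ∘L R = R := cluster_idem hPproj hcl
  obtain ⟨z, hzS, hzx, hPz⟩ := hcl
  set y := (f.symm : X → X)^[n*m] x with hydef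
  set C := cpow (f : X → X) A (n*m) y with hCdef
  have hUC : IsUnit C := cpow_isUnit _ hAinv _ _
  have hUB : IsUnit (Ring.inverse C) := isUnit_inverse hUC
  set z' : ℕ → X := fun j => (f.symm : X → X)^[n*m] (z j) with hz'def
  have hz'S : ∀ j, z' j ∈ S := fun j => mem_S_symm_iterate hS _ (hzS j)
  have hfz' : ∀ j, (f : X → X)^[n*m] (z' j) = z j := fun j => iterate_symm_iterate f _ _
  have hz'x : Tendsto z' atTop (𝓝 y) :=
    (((f.symm.continuous.iterate (n*m)).tendsto x).comp hzx)
  have ht1 : Tendsto (fun j => cpow (f : X → X) A (n*m) (z' j)) atTop (𝓝 C) :=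
    ((cpow_continuous f.continuous hAcont (n*m)).tendsto y).comp hz'x
  have ht2 : Tendsto (fun j => Ring.inverse (cpow (f : X → X) A (n*m) (z' j))) atTop
      (𝓝 (Ring.inverse C)) :=
    ((cpow_inv_continuous f.continuous hAcont hAinv (n*m)).tendsto y).comp hz'x
  -- P (z' j) = inv ∘ P(z j) ∘ cpow, converging to inv C ∘ R ∘ C
  have hPi1 : Tendsto (fun j => P (z' j)) atTop
      (𝓝 (Ring.inverse C ∘L R ∘L Ring.inverse (Ring.inverse C))) := by
    have hconv : Tendsto (fun j => Ring.inverse (cpow (f : X → X) A (n*m) (z' j)) *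
        (P (z j) * cpow (f : X → X) A (n*m) (z' j))) atTop
        (𝓝 (Ring.inverse C * (R * C))) := ht2.mul (hPz.mul ht1)
    have heq : ∀ j, P (z' j) = Ring.inverse (cpow (f : X → X) A (n*m) (z' j)) *
        (P (z j) * cpow (f : X → X) A (n*m) (z' j)) := by
      intro j
      have hU' : IsUnit (cpow (f : X → X) A (n*m) (z' j)) := cpow_isUnit _ hAinv _ _
      refine ContinuousLinearMap.ext fun v => ?_
      have h2 := DFunLike.congr_fun (cpow_comm hS hPinv (n*m) (z' j) (hz'S j)) v
      simp only [ContinuousLinearMap.comp_apply] at h2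
      show P (z' j) v = Ring.inverse (cpow (f : X → X) A (n*m) (z' j))
        ((P (z j)) (cpow (f : X → X) A (n*m) (z' j) v))
      rw [← hfz' j, ← h2, inv_apply_apply hU']
    have hfin : Ring.inverse C * (R * C) =
        Ring.inverse C ∘L R ∘L Ring.inverse (Ring.inverse C) := by
      rw [inverse_inverse hUC]; rfl
    rw [hfin] at hconv
    exact hconv.congr (fun j => (heq j).symm)
  have hR1 : (Ring.inverse C ∘L R ∘L Ring.inverse (Ring.inverse C)) ∘L
      (Ring.inverse C ∘L R ∘L Ring.inverse (Ring.inverse C)) =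
      Ring.inverse C ∘L R ∘L Ring.inverse (Ring.inverse C) := conj_idem hUB hRid
  have hj : ∀ j, subNorm (cpow (f : X → X) A (n*m) (z' j))
      (LinearMap.range (P (z' j) : EuclideanSpace ℝ (Fin d) →ₗ[ℝ] EuclideanSpace ℝ (Fin d))) *
      subNorm (Ring.inverse (cpow (f : X → X) A (n*m) (z' j)))
        (LinearMap.ker (P (z j) : EuclideanSpace ℝ (Fin d) →ₗ[ℝ] EuclideanSpace ℝ (Fin d))) ≤ lam ^ n := by
    intro j
    have := Dn hS hAinv hPproj hPinv hlam hdom' n (z' j) (hz'S j)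
    rwa [hfz' j] at this
  have hlim := limit_dom (pow_nonneg hlam.1.le n) ht1 ht2 hPi1 hPz hR1
    (fun j => hPproj _ (hzS j)) hj
  rwa [conj_range (R := R) hUB] at hlim

end MainB

section MainC
variable [MetricSpace X] [CompactSpace X] {f : X ≃ₜ X}
  {A : X → (EuclideanSpace ℝ (Fin d) →L[ℝ] EuclideanSpace ℝ (Fin d))}
  {S : Set X}
  {P : X → (EuclideanSpace ℝ (Fin d) →L[ℝ] EuclideanSpace ℝ (Fin d))}
  {k m : ℕ} {lam : ℝ} {K : ℝ}

/-- Uniqueness of cluster values. -/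
lemma cluster_unique (hS : (f : X → X) '' S = S) (hAcont : Continuous A)
    (hAinv : ∀ x, IsUnit (A x))
    (hPproj : ∀ x ∈ S, P x ∘L P x = P x)
    (hPinv : ∀ x ∈ S, A x ∘L P x = P (f x) ∘L A x)
    (hd : 1 ≤ d) (hk1 : 1 ≤ k) (hkd : k + 1 ≤ d)
    (hrank : ∀ x ∈ S, Module.finrank ℝ (LinearMap.range (P x : EuclideanSpace ℝ (Fin d) →ₗ[ℝ] EuclideanSpace ℝ (Fin d))) = k)
    (hlam : lam ∈ Set.Ioo (0:ℝ) 1)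
    (hdom' : ∀ x ∈ S, subNorm (cpow (f : X → X) A m x) (LinearMap.range (P x : EuclideanSpace ℝ (Fin d) →ₗ[ℝ] EuclideanSpace ℝ (Fin d))) *
      subNorm (Ring.inverse (cpow (f : X → X) A m x))
        (LinearMap.ker (P ((f : X → X)^[m] x) : EuclideanSpace ℝ (Fin d) →ₗ[ℝ] EuclideanSpace ℝ (Fin d))) ≤ lam)
    {x : X} {R₁ R₂ : EuclideanSpace ℝ (Fin d) →L[ℝ] EuclideanSpace ℝ (Fin d)}
    (h1 : IsClusterProj S P x R₁) (h2 : IsClusterProj S P x R₂) : R₁ = R₂ := by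
  have hid1 := cluster_idem hPproj h1
  have hid2 := cluster_idem hPproj h2
  obtain ⟨hr1, hkr1⟩ := cluster_rank hPproj hrank hd (by omega) h1
  obtain ⟨hr2, hkr2⟩ := cluster_rank hPproj hrank hd (by omega) h2
  have hrange : LinearMap.range (R₁ : EuclideanSpace ℝ (Fin d) →ₗ[ℝ] EuclideanSpace ℝ (Fin d)) = LinearMap.range (R₂ : EuclideanSpace ℝ (Fin d) →ₗ[ℝ] EuclideanSpace ℝ (Fin d)) := by
    exact unique_dominated hlam.1 hlam.2 (fun n => cpow (f : X → X) A (n*m) x)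
      (fun n => cpow_isUnit _ hAinv _ _) (idem_isCompl hid1) (idem_isCompl hid2)
      (by rw [hr1, hr2]) (range_ne_bot_of_finrank hk1 hr1) (range_ne_bot_of_finrank hk1 hr2)
      (fun n => cluster_fdom hS hAcont hAinv hPproj hPinv hlam hdom' h1 n)
      (fun n => cluster_fdom hS hAcont hAinv hPproj hPinv hlam hdom' h2 n)
  have hker : LinearMap.ker (R₁ : EuclideanSpace ℝ (Fin d) →ₗ[ℝ] EuclideanSpace ℝ (Fin d)) = LinearMap.ker (R₂ : EuclideanSpace ℝ (Fin d) →ₗ[ℝ] EuclideanSpace ℝ (Fin d)) := by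
    refine unique_dominated hlam.1 hlam.2
      (fun n => Ring.inverse (cpow (f : X → X) A (n*m) ((f.symm : X → X)^[n*m] x)))
      (fun n => isUnit_inverse (cpow_isUnit _ hAinv _ _))
      (idem_isCompl hid1).symm (idem_isCompl hid2).symm
      (by rw [hkr1, hkr2]) (ker_ne_bot_of_finrank (by omega) hkr1)
      (ker_ne_bot_of_finrank (by omega) hkr2) ?_ ?_
    · intro n
      have hb := cluster_bdom hS hAcont hAinv hPproj hPinv hlam hdom' h1 n
      rw [inverse_inverse (cpow_isUnit _ hAinv _ _), mul_comm]
      exact hb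
    · intro n
      have hb := cluster_bdom hS hAcont hAinv hPproj hPinv hlam hdom' h2 n
      rw [inverse_inverse (cpow_isUnit _ hAinv _ _), mul_comm]
      exact hb
  exact idem_ext hid1 hid2 hrange hker

end MainC

/-- A dominated splitting over an invariant set `S` extends continuously to a dominated
splitting over `closure S`, with the same constants `m` and `λ`, the same rank, and
agreeing with the original splitting on `S`. -/
theorem dominated_splitting_extends_to_closure {d : ℕ} (hd : 1 ≤ d)
    [MetricSpace X] [CompactSpace X] (f : X ≃ₜ X)
    (A : X → (EuclideanSpace ℝ (Fin d) →L[ℝ] EuclideanSpace ℝ (Fin d)))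
    (hAcont : Continuous A) (hAinv : ∀ x, IsUnit (A x))
    (S : Set X) (hS : (f : X → X) '' S = S)
    (P : X → (EuclideanSpace ℝ (Fin d) →L[ℝ] EuclideanSpace ℝ (Fin d)))
    (hPproj : ∀ x ∈ S, P x ∘L P x = P x)
    (hPinv : ∀ x ∈ S, A x ∘L P x = P (f x) ∘L A x)
    (k : ℕ) (hk1 : 1 ≤ k) (hk2 : k ≤ d - 1)
    (hrank : ∀ x ∈ S, Module.finrank ℝ
      (LinearMap.range (P x : EuclideanSpace ℝ (Fin d) →ₗ[ℝ] EuclideanSpace ℝ (Fin d))) = k)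
    (m : ℕ) (hm : 1 ≤ m) (lam : ℝ) (hlam : lam ∈ Set.Ioo (0 : ℝ) 1)
    (hdom : ∀ x ∈ S,
      subNorm (cIter f A (m : ℤ) x)
        (LinearMap.range (P x : EuclideanSpace ℝ (Fin d) →ₗ[ℝ] EuclideanSpace ℝ (Fin d))) *
        subNorm (cIter f A (-(m : ℤ)) ((f : X → X)^[m] x))
          (LinearMap.ker (P ((f : X → X)^[m] x) : EuclideanSpace ℝ (Fin d) →ₗ[ℝ] EuclideanSpace ℝ (Fin d))) ≤ lam) :
    ∃ Q : X → (EuclideanSpace ℝ (Fin d) →L[ℝ] EuclideanSpace ℝ (Fin d)),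
      ContinuousOn Q (closure S) ∧
      (∀ x ∈ closure S,
        Q x ∘L Q x = Q x ∧
        A x ∘L Q x = Q (f x) ∘L A x ∧
        Module.finrank ℝ
          (LinearMap.range (Q x : EuclideanSpace ℝ (Fin d) →ₗ[ℝ] EuclideanSpace ℝ (Fin d))) = k ∧
        subNorm (cIter f A (m : ℤ) x)
          (LinearMap.range (Q x : EuclideanSpace ℝ (Fin d) →ₗ[ℝ] EuclideanSpace ℝ (Fin d))) *
          subNorm (cIter f A (-(m : ℤ)) ((f : X → X)^[m] x))
            (LinearMap.ker (Q ((f : X → X)^[m] x) :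
              EuclideanSpace ℝ (Fin d) →ₗ[ℝ] EuclideanSpace ℝ (Fin d))) ≤ lam) ∧
      ∀ x ∈ S, Q x = P x := by
  classical
  rcases Set.eq_empty_or_nonempty S with hSe | hSne
  · refine ⟨P, ?_, ?_, ?_⟩
    · rw [hSe, closure_empty]; exact continuousOn_empty _
    · intro x hx; rw [hSe, closure_empty] at hx; exact absurd hx (Set.notMem_empty x)
    · intro x hx; rfl
  have hkd : k + 1 ≤ d := by omega
  -- domination in `cpow` form
  have hdom' : ∀ x ∈ S, subNorm (cpow (f : X → X) A m x) (LinearMap.range (P x : EuclideanSpace ℝ (Fin d) →ₗ[ℝ] EuclideanSpace ℝ (Fin d))) *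
      subNorm (Ring.inverse (cpow (f : X → X) A m x))
        (LinearMap.ker (P ((f : X → X)^[m] x) : EuclideanSpace ℝ (Fin d) →ₗ[ℝ] EuclideanSpace ℝ (Fin d))) ≤ lam := by
    intro x hx
    have h1 := hdom x hx
    rwa [cIter_coe, cIter_neg_iterate] at h1
  -- uniform bound on ‖P x‖
  obtain ⟨K, hK1, hPK⟩ :=
    exists_K hS hAcont hAinv hPproj hPinv hd hk1 hkd hrank hlam hdom'
  -- cluster values
  choose Rfun hRfun using fun (x : X) (hx : x ∈ closure S) =>
    cluster_exists (S := S) (P := P) hPK hx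
  set Q : X → (EuclideanSpace ℝ (Fin d) →L[ℝ] EuclideanSpace ℝ (Fin d)) :=
    fun x => if hx : x ∈ closure S then Rfun x hx else P x with hQdef
  have hQcl : ∀ x (hx : x ∈ closure S), IsClusterProj S P x (Q x) := by
    intro x hx
    simp only [hQdef, dif_pos hx]
    exact hRfun x hx
  have huniq : ∀ (x : X) (R₁ R₂ : EuclideanSpace ℝ (Fin d) →L[ℝ] EuclideanSpace ℝ (Fin d)),
      IsClusterProj S P x R₁ → IsClusterProj S P x R₂ → R₁ = R₂ :=
    fun x R₁ R₂ h1 h2 =>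
      cluster_unique hS hAcont hAinv hPproj hPinv hd hk1 hkd hrank hlam hdom' h1 h2
  -- convergence of P along any sequence in S tending to a point of the closure
  have hQconv : ∀ x ∈ closure S, ∀ z : ℕ → X, (∀ j, z j ∈ S) → Tendsto z atTop (𝓝 x) →
      Tendsto (fun j => P (z j)) atTop (𝓝 (Q x)) := by
    intro x hx z hzS hzx
    by_contra hnc
    rw [Metric.tendsto_atTop] at hnc
    push_neg at hnc
    obtain ⟨ε, hε, hfreq⟩ := hnc
    have hfr : ∃ᶠ j in atTop, ε ≤ dist (P (z j)) (Q x) := by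
      rw [Filter.frequently_atTop]
      intro a
      obtain ⟨n, hn, h⟩ := hfreq a
      exact ⟨n, hn, h⟩
    obtain ⟨φ, hφ, hφε⟩ := Filter.extraction_of_frequently_atTop hfr
    have hball : ∀ j, P (z (φ j)) ∈
        Metric.closedBall (0 : EuclideanSpace ℝ (Fin d) →L[ℝ] EuclideanSpace ℝ (Fin d)) K :=
      fun j => by
        simpa [Metric.mem_closedBall, dist_zero_right] using hPK (z (φ j)) (hzS (φ j))
    obtain ⟨R', _, ψ, hψ, hconv⟩ := (isCompact_closedBall
      (0 : EuclideanSpace ℝ (Fin d) →L[ℝ] EuclideanSpace ℝ (Fin d)) K).tendsto_subseq hball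
    have hconv' : Tendsto (fun j => P (z (φ (ψ j)))) atTop (𝓝 R') := hconv
    have hcl' : IsClusterProj S P x R' := ⟨fun j => z (φ (ψ j)), fun j => hzS _,
      (hzx.comp hφ.tendsto_atTop).comp hψ.tendsto_atTop, hconv'⟩
    have hR' : R' = Q x := huniq x R' (Q x) hcl' (hQcl x hx)
    have h0 : Tendsto (fun j => dist (P (z (φ (ψ j)))) (Q x)) atTop (𝓝 0) := by
      rw [← hR']
      exact tendsto_iff_dist_tendsto_zero.mp hconv'
    have h1 : ε ≤ 0 := ge_of_tendsto' h0 (fun j => hφε (ψ j))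
    linarith
  -- agreement on S
  have hQS : ∀ x ∈ S, Q x = P x := by
    intro x hx
    have h1 : IsClusterProj S P x (P x) :=
      ⟨fun _ => x, fun _ => hx, tendsto_const_nhds, tendsto_const_nhds⟩
    exact huniq x (Q x) (P x) (hQcl x (subset_closure hx)) h1
  -- closure is invariant
  have hclf : ∀ x ∈ closure S, (f : X → X) x ∈ closure S := by
    intro x hx
    have h1 : (f : X → X) x ∈ (f : X → X) '' closure S := Set.mem_image_of_mem _ hx
    have h2 := image_closure_subset_closure_image (f := (f : X → X)) f.continuous (s := S)
    have h3 := h2 h1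
    rwa [hS] at h3
  have hclfn : ∀ n, ∀ x ∈ closure S, (f : X → X)^[n] x ∈ closure S := by
    intro n
    induction n with
    | zero => intro x hx; simpa using hx
    | succ n ih =>
        intro x hx
        rw [Function.iterate_succ_apply']
        exact hclf _ (ih x hx)
  refine ⟨Q, ?_, ?_, hQS⟩
  · -- continuity on the closure
    rw [Metric.continuousOn_iff]
    intro x hx ε hε
    by_contra hno
    push_neg at hno
    have hseq : ∀ j : ℕ, ∃ y ∈ closure S, dist y x < 1/((j:ℝ)+1) ∧ ε ≤ dist (Q y) (Q x) := by
      intro j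
      obtain ⟨y, hy, h1, h2⟩ := hno (1/((j:ℝ)+1)) (by positivity)
      exact ⟨y, hy, h1, h2⟩
    choose y hyc hyd hyε using hseq
    have hpick : ∀ j : ℕ, ∃ w ∈ S, dist w (y j) < 1/((j:ℝ)+1) ∧
        dist (P w) (Q (y j)) < ε/2 := by
      intro j
      obtain ⟨zz, hzzS, hzzy, hzzP⟩ := hQcl (y j) (hyc j)
      have h1 : ∀ᶠ i in atTop, dist (zz i) (y j) < 1/((j:ℝ)+1) :=
        Metric.tendsto_nhds.mp hzzy _ (by positivity)
      have h2 : ∀ᶠ i in atTop, dist (P (zz i)) (Q (y j)) < ε/2 :=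
        Metric.tendsto_nhds.mp hzzP _ (by positivity)
      obtain ⟨i, hi1, hi2⟩ := (h1.and h2).exists
      exact ⟨zz i, hzzS i, hi1, hi2⟩
    choose w hwS hwy hwP using hpick
    have hwx : Tendsto w atTop (𝓝 x) := by
      have hb : ∀ j : ℕ, dist (w j) x ≤ 2 * (1/((j:ℝ)+1)) := by
        intro j
        have h1 := dist_triangle (w j) (y j) x
        have h2 := hwy j
        have h3 := hyd j
        linarith
      have h0 : Tendsto (fun j : ℕ => 2 * (1/((j:ℝ)+1))) atTop (𝓝 0) := by
        have h1 := tendsto_one_div_add_atTop_nhds_zero_nat (𝕜 := ℝ)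
        have h2 := h1.const_mul (2:ℝ)
        simpa using h2
      rw [tendsto_iff_dist_tendsto_zero]
      exact squeeze_zero (fun j => dist_nonneg) hb h0
    have hPwQx : Tendsto (fun j => P (w j)) atTop (𝓝 (Q x)) := hQconv x hx w hwS hwx
    have hev : ∀ᶠ j in atTop, dist (P (w j)) (Q x) < ε/2 :=
      Metric.tendsto_nhds.mp hPwQx _ (by positivity)
    obtain ⟨j, hj⟩ := hev.exists
    have h1 := hyε j
    have h2 := hwP j
    have htri := dist_triangle (Q (y j)) (P (w j)) (Q x)
    rw [dist_comm (Q (y j)) (P (w j))] at htri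
    linarith
  · -- properties at points of the closure
    intro x hx
    have hQidem : Q x ∘L Q x = Q x := cluster_idem hPproj (hQcl x hx)
    obtain ⟨z, hzS, hzx, hPz⟩ := hQcl x hx
    refine ⟨hQidem, ?_, ?_, ?_⟩
    · -- invariance
      have hfx : (f : X → X) x ∈ closure S := hclf x hx
      have hPzf : Tendsto (fun j => P ((f : X → X) (z j))) atTop (𝓝 (Q ((f : X → X) x))) :=
        hQconv _ hfx (fun j => (f : X → X) (z j)) (fun j => mem_S_f hS (hzS j))
          ((f.continuous.tendsto x).comp hzx)
      have hA : Tendsto (fun j => A (z j)) atTop (𝓝 (A x)) := (hAcont.tendsto x).comp hzx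
      have h1 : Tendsto (fun j => A (z j) * P (z j)) atTop (𝓝 (A x * Q x)) := hA.mul hPz
      have h2 : Tendsto (fun j => A (z j) * P (z j)) atTop
          (𝓝 (Q ((f : X → X) x) * A x)) := by
        have h3 : (fun j => A (z j) * P (z j)) = fun j => P ((f : X → X) (z j)) * A (z j) :=
          funext fun j => hPinv (z j) (hzS j)
        rw [h3]
        exact hPzf.mul hA
      exact tendsto_nhds_unique h1 h2
    · -- rank
      exact (cluster_rank hPproj hrank hd (by omega) ⟨z, hzS, hzx, hPz⟩).1
    · -- domination
      rw [cIter_coe, cIter_neg_iterate]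
      have hfmx : (f : X → X)^[m] x ∈ closure S := hclfn m x hx
      have hPz2 : Tendsto (fun j => P ((f : X → X)^[m] (z j))) atTop
          (𝓝 (Q ((f : X → X)^[m] x))) :=
        hQconv _ hfmx (fun j => (f : X → X)^[m] (z j))
          (fun j => mem_S_iterate hS m (hzS j))
          (((f.continuous.iterate m).tendsto x).comp hzx)
      have ht1 : Tendsto (fun j => cpow (f : X → X) A m (z j)) atTop
          (𝓝 (cpow (f : X → X) A m x)) :=
        ((cpow_continuous f.continuous hAcont m).tendsto x).comp hzx
      have ht2 : Tendsto (fun j => Ring.inverse (cpow (f : X → X) A m (z j))) atTop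
          (𝓝 (Ring.inverse (cpow (f : X → X) A m x))) :=
        ((cpow_inv_continuous f.continuous hAcont hAinv m).tendsto x).comp hzx
      exact limit_dom hlam.1.le ht1 ht2 hPz hPz2 hQidem
        (fun j => hPproj _ (mem_S_iterate hS m (hzS j)))
        (fun j => hdom' (z j) (hzS j))
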